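/- arXiv:1311.7060 — 10 statements merged into one kernel-verified Lean document; each statement's English description precedes it below -/
import Mathlib

section
/- Let G ≤ Sym(n) be a transitive permutation group that contains a sharply transitive subset (a set of n permutations such that for all i, j ∈ {1,...,n} there is exactly one permutation in the set mapping i to j). Then any intersecting subset S of G satisfies |S| ≤ |G|/n, i.e., G has the EKR property. -/
/-- A group with a sharply transitive set has the EKR property:
any intersecting subset has size at most |G|/n. -/
theorem stmt_0 (n : ℕ) (hn : 0 < n) (G : Subgroup (Equiv.Perm (Fin n)))
    (htrans : ∀ x y : Fin n, ∃ g ∈ G, g x = y)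
    (T : Finset (Equiv.Perm (Fin n))) (hTG : ↑T ⊆ (G : Set (Equiv.Perm (Fin n))))
    (hTcard : T.card = n)
    (hsharp : ∀ x y : Fin n, ∃! τ, τ ∈ T ∧ τ x = y)
    (S : Finset (Equiv.Perm (Fin n))) (hSG : ↑S ⊆ (G : Set (Equiv.Perm (Fin n))))
    (hS : ∀ π ∈ S, ∀ σ ∈ S, ∃ x, π x = σ x) :
    S.card * n ≤ Nat.card G := by
  classical
  have hinj : Set.InjOn (fun p : Equiv.Perm (Fin n) × Equiv.Perm (Fin n) => p.1 * p.2⁻¹)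
      ↑(S ×ˢ T) := by
    rintro ⟨s₁, t₁⟩ hp ⟨s₂, t₂⟩ hq h
    simp only [Finset.coe_product, Set.mem_prod] at hp hq
    simp only at h
    obtain ⟨x, hx⟩ := hS s₁ hp.1 s₂ hq.1
    have heq : s₂⁻¹ * s₁ = t₂⁻¹ * t₁ := by
      have h' : s₁ = s₂ * t₂⁻¹ * t₁ := by rw [← h]; group
      rw [h']; group
    have hfix : t₁ x = t₂ x := by
      have : (s₂⁻¹ * s₁) x = x := by
        simp [Equiv.Perm.mul_apply, hx]
      rw [heq] at this
      have := congrArg t₂ this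
      simpa [Equiv.Perm.mul_apply] using this
    have ht : t₁ = t₂ := by
      obtain ⟨τ, _, huniq⟩ := hsharp x (t₁ x)
      exact (huniq t₁ ⟨hp.2, rfl⟩).trans (huniq t₂ ⟨hq.2, hfix.symm⟩).symm
    have hs : s₁ = s₂ := by
      have := h
      rw [ht] at this
      exact mul_right_cancel this
    simp [hs, ht]
  have hsub : ((S ×ˢ T).image fun p => p.1 * p.2⁻¹) ⊆ (G : Set _).toFinset := by
    intro g hg
    simp only [Finset.mem_image, Finset.mem_product] at hg
    obtain ⟨⟨s, t⟩, ⟨hs, ht⟩, rfl⟩ := hg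
    simp only [Set.mem_toFinset]
    exact mul_mem (hSG hs) (inv_mem (hTG ht))
  have h1 : ((S ×ˢ T).image fun p => p.1 * p.2⁻¹).card = S.card * n := by
    rw [Finset.card_image_of_injOn hinj, Finset.card_product, hTcard]
  calc S.card * n = ((S ×ˢ T).image fun p => p.1 * p.2⁻¹).card := h1.symm
    _ ≤ (G : Set _).toFinset.card := Finset.card_le_card hsub
    _ = Nat.card G := by rw [Set.toFinset_card, Nat.card_eq_fintype_card]; rfl
end

section
/- Any permutation group G ≤ Sym(n) that contains an n-cycle has the EKR property: every intersecting subset of G has size at most |G|/n. -/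
/-- Any permutation group of degree n containing an n-cycle has the EKR property:
every intersecting subset has size at most |G|/n. -/
theorem stmt_1 (n : ℕ) (hn : 0 < n) (G : Subgroup (Equiv.Perm (Fin n)))
    (σ : Equiv.Perm (Fin n)) (hσG : σ ∈ G)
    (hcycle : σ.IsCycle) (hsupp : σ.support.card = n)
    (S : Finset (Equiv.Perm (Fin n))) (hSG : ↑S ⊆ (G : Set (Equiv.Perm (Fin n))))
    (hS : ∀ π ∈ S, ∀ τ ∈ S, ∃ x, π x = τ x) :
    S.card * n ≤ Nat.card G := by
  classical
  have hsupp' : σ.support = Finset.univ :=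
    Finset.eq_univ_of_card _ (by simp [hsupp])
  have hmove : ∀ x : Fin n, σ x ≠ x := by
    intro x
    have : x ∈ σ.support := hsupp' ▸ Finset.mem_univ x
    exact Equiv.Perm.mem_support.mp this
  have horder : orderOf σ = n := by rw [hcycle.orderOf, hsupp]
  have hσn : σ ^ n = 1 := by have := pow_orderOf_eq_one σ; rwa [horder] at this
  have hNat : Nat.card G = (Set.toFinset (G : Set (Equiv.Perm (Fin n)))).card := by
    rw [Set.toFinset_card, Nat.card_eq_fintype_card]
    exact Fintype.card_congr (Equiv.refl _)
  rw [hNat]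
  have hcard : (S ×ˢ (Finset.univ : Finset (Fin n))).card = S.card * n := by
    simp [Finset.card_product]
  rw [← hcard]
  apply Finset.card_le_card_of_injOn (fun p => p.1 * σ ^ (p.2 : ℕ))
  · rintro ⟨π, i⟩ hp
    simp only [Finset.coe_product, Set.mem_prod, Finset.mem_coe] at hp
    simp only [Finset.mem_coe, Set.mem_toFinset]
    exact mul_mem (hSG hp.1) (pow_mem hσG _)
  · rintro ⟨π, i⟩ hp ⟨τ, j⟩ hq h
    simp only [Finset.coe_product, Set.mem_prod, Finset.mem_coe] at hp hq
    simp only at h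
    have hi : (i : ℕ) < n := i.isLt
    have hj : (j : ℕ) < n := j.isLt
    have hinv : (σ ^ (i : ℕ))⁻¹ = σ ^ (n - (i : ℕ)) := by
      rw [inv_eq_iff_mul_eq_one, ← pow_add, Nat.add_sub_cancel' hi.le, hσn]
    have hπ : π = τ * σ ^ (j : ℕ) * (σ ^ (i : ℕ))⁻¹ :=
      eq_mul_inv_iff_mul_eq.mpr h
    have key : τ⁻¹ * π = σ ^ ((j : ℕ) + (n - (i : ℕ))) := by
      rw [hπ, hinv, pow_add]; group
    obtain ⟨x, hx⟩ := hS π hp.1 τ hq.1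
    have hfix : (σ ^ ((j : ℕ) + (n - (i : ℕ)))) x = x := by
      rw [← key]
      simp [Equiv.Perm.mul_apply, hx]
    have hone : σ ^ ((j : ℕ) + (n - (i : ℕ))) = 1 :=
      (hcycle.pow_eq_one_iff' (hmove x)).mpr hfix
    have hdvd : n ∣ (j : ℕ) + (n - (i : ℕ)) := by
      have := orderOf_dvd_of_pow_eq_one hone; rwa [horder] at this
    have hij : (i : ℕ) = (j : ℕ) := by
      obtain ⟨k, hk⟩ := hdvd
      have hk1 : k = 1 := by
        rcases k with _ | _ | k
        · omega
        · rfl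
        · exfalso
          have h2 : n * 2 ≤ n * (k + 1 + 1) := Nat.mul_le_mul_left n (by omega)
          omega
      subst hk1
      omega
    have hij' : i = j := Fin.ext hij
    have hπτ : π = τ := by
      rw [hij'] at h
      exact mul_right_cancel h
    simp [hπτ, hij']
end

section
/- Let σ ∈ Sym(n) with shortest cycle length r₁ (in its disjoint cycle decomposition) and let G = ⟨σ⟩. Then every intersecting subset of G of maximum size |G|/r₁ is a coset of the stabilizer in G of a point lying on a shortest cycle. In particular every cyclic permutation group has the strict EKR property. -/
/-- Combinatorial core: a subset `T` of `ZMod N` of size `M = N / r₁` containing `0`,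
all of whose pairwise differences have `val ≥ r₁`, is exactly the set of multiples of `r₁`. -/
private lemma ekr_combin (N r₁ M : ℕ) (hN : 0 < N) (hr : 0 < r₁) (hM : N = M * r₁)
    (T : Finset (ZMod N)) (hT0 : (0 : ZMod N) ∈ T) (hcard : T.card = M)
    (hgap : ∀ t ∈ T, ∀ s ∈ T, t ≠ s → r₁ ≤ (t - s).val) :
    ∀ k : ZMod N, k ∈ T ↔ r₁ ∣ k.val := by
  haveI : NeZero N := ⟨hN.ne'⟩
  have hMpos : 0 < M := Nat.pos_of_ne_zero (by rintro rfl; simp at hM; omega)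
  have hsub : ∀ t s : ZMod N, s.val ≤ t.val → (t - s).val = t.val - s.val := by
    intro t s h
    have h1 : ((t.val - s.val : ℕ) : ZMod N) = t - s := by
      rw [Nat.cast_sub h, ZMod.natCast_val, ZMod.natCast_val, ZMod.cast_id, ZMod.cast_id]
    rw [← h1, ZMod.val_cast_of_lt (lt_of_le_of_lt (Nat.sub_le _ _) (ZMod.val_lt t))]
  have hwrap : ∀ t s : ZMod N, t.val < s.val → (t - s).val = t.val + (N - s.val) := by
    intro t s h
    have h1 : ((t.val + (N - s.val) : ℕ) : ZMod N) = t - s := by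
      rw [Nat.cast_add, Nat.cast_sub (ZMod.val_lt s).le, ZMod.natCast_self,
        ZMod.natCast_val, ZMod.natCast_val, ZMod.cast_id, ZMod.cast_id]
      ring
    have h2 : t.val + (N - s.val) < N := by
      have := ZMod.val_lt s
      omega
    rw [← h1, ZMod.val_cast_of_lt h2]
  -- injectivity of the block map
  have hstep : ∀ t ∈ T, ∀ s ∈ T, s.val < t.val → t.val / r₁ = s.val / r₁ → False := by
    intro t ht s hs hlt hq
    have hne : t ≠ s := fun h => by rw [h] at hlt; omega
    have hg := hgap t ht s hs hne
    rw [hsub t s hlt.le] at hg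
    have h1 : s.val / r₁ * r₁ ≤ s.val := Nat.div_mul_le_self _ _
    have h2 : t.val < t.val / r₁ * r₁ + r₁ := Nat.lt_div_mul_add hr
    rw [hq] at h2
    omega
  have hinj : ∀ t ∈ T, ∀ s ∈ T, t.val / r₁ = s.val / r₁ → t = s := by
    intro t ht s hs hq
    rcases lt_trichotomy t.val s.val with h | h | h
    · exact absurd (hstep s hs t ht h hq.symm) (by simp)
    · exact ZMod.val_injective N h
    · exact absurd (hstep t ht s hs h hq) (by simp)
  have hvblock : ∀ k : ZMod N, k.val / r₁ < M := by
    intro k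
    have := ZMod.val_lt k
    rw [Nat.div_lt_iff_lt_mul hr]
    omega
  have himg : T.image (fun k => k.val / r₁) = Finset.range M := by
    apply Finset.eq_of_subset_of_card_le
    · intro j hj
      rw [Finset.mem_image] at hj
      obtain ⟨k, _, rfl⟩ := hj
      rw [Finset.mem_range]
      exact hvblock k
    · rw [Finset.card_range, Finset.card_image_of_injOn (fun t ht s hs h => hinj t ht s hs h),
        hcard]
  have hsurj : ∀ j, j < M → ∃ k ∈ T, k.val / r₁ = j := by
    intro j hj
    have : j ∈ T.image (fun k => k.val / r₁) := by rw [himg, Finset.mem_range]; exact hj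
    rw [Finset.mem_image] at this
    obtain ⟨k, hk, hk2⟩ := this
    exact ⟨k, hk, hk2⟩
  set P : ℕ → Prop := fun j => ∀ k ∈ T, k.val / r₁ = j → k.val = j * r₁ with hP_def
  have hPtop : P (M - 1) := by
    intro k hk hj
    by_cases hM1 : M = 1
    · subst hM1
      obtain ⟨a, ha⟩ := Finset.card_eq_one.mp hcard
      rw [ha, Finset.mem_singleton] at hk hT0
      rw [hk, ← hT0, ZMod.val_zero]
      simp
    · have hM2 : 2 ≤ M := by omega
      have hMr : (M - 1) * r₁ + r₁ = M * r₁ := by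
        cases M with
        | zero => omega
        | succ m => simp [Nat.succ_sub_one, Nat.succ_mul]
      have h1 : (M - 1) * r₁ ≤ k.val := by
        rw [← hj]; exact Nat.div_mul_le_self _ _
      have h2 : k.val < (M - 1) * r₁ + r₁ := by
        rw [← hj]; exact Nat.lt_div_mul_add hr
      have h4 : r₁ ≤ (M - 1) * r₁ := Nat.le_mul_of_pos_left r₁ (by omega)
      have hkvpos : 0 < k.val := by omega
      have hk0 : (0 : ZMod N) ≠ k := by
        intro h
        rw [← h, ZMod.val_zero] at hkvpos; omega
      have hg := hgap 0 hT0 k hk hk0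
      rw [hwrap 0 k (by rw [ZMod.val_zero]; exact hkvpos)] at hg
      rw [ZMod.val_zero] at hg
      omega
  have hPstep : ∀ j, j + 1 < M → P (j + 1) → P j := by
    intro j hjM hPj k hk hj
    obtain ⟨k', hk', hk'j⟩ := hsurj (j + 1) hjM
    have hk'v : k'.val = (j + 1) * r₁ := hPj k' hk' hk'j
    have hne : k' ≠ k := by
      intro h; rw [h, hj] at hk'j; omega
    have h1 : j * r₁ ≤ k.val := by
      rw [← hj]; exact Nat.div_mul_le_self _ _
    have h2 : k.val < j * r₁ + r₁ := by
      rw [← hj]; exact Nat.lt_div_mul_add hr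
    have hmul : (j + 1) * r₁ = j * r₁ + r₁ := by ring
    have hlt : k.val < k'.val := by omega
    have hg := hgap k' hk' k hk hne
    rw [hsub k' k hlt.le] at hg
    omega
  have hPall : ∀ j, j < M → P j := by
    have haux : ∀ i, i ≤ M - 1 → P (M - 1 - i) := by
      intro i
      induction i with
      | zero => intro _; simpa using hPtop
      | succ i ih =>
        intro hi
        have h1 : M - 1 - (i + 1) + 1 = M - 1 - i := by omega
        by_cases h0 : M - 1 - i = 0
        · have : M - 1 - (i + 1) = M - 1 - i := by omega
          rw [this]; exact ih (by omega)
        · exact hPstep (M - 1 - (i + 1)) (by omega) (h1 ▸ ih (by omega))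
    intro j hj
    have h1 := haux (M - 1 - j) (by omega)
    have h2 : M - 1 - (M - 1 - j) = j := by omega
    rwa [h2] at h1
  intro k
  constructor
  · intro hk
    have h1 := hPall (k.val / r₁) (hvblock k) k hk rfl
    exact Dvd.intro_left (k.val / r₁) h1.symm
  · intro hdvd
    obtain ⟨k', hk', hk'j⟩ := hsurj (k.val / r₁) (hvblock k)
    have h1 := hPall (k.val / r₁) (hvblock k) k' hk' hk'j
    have h2 : k.val / r₁ * r₁ = k.val := Nat.div_mul_cancel hdvd
    have : k = k' := ZMod.val_injective N (by omega)
    rwa [this]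

/-- Strict EKR property for cyclic groups: every intersecting subset of G = ⟨σ⟩ of
maximum size |G|/r₁ (r₁ the shortest cycle length of σ) is a coset of the stabilizer
in G of a point lying on a shortest cycle. -/
theorem stmt_3 (n : ℕ) (hn : 0 < n) (σ : Equiv.Perm (Fin n)) (r₁ : ℕ)
    (hr₁ : IsLeast {r : ℕ | ∃ x : Fin n, Function.minimalPeriod (⇑σ) x = r} r₁)
    (S : Finset (Equiv.Perm (Fin n)))
    (hSG : ↑S ⊆ (Subgroup.zpowers σ : Set (Equiv.Perm (Fin n))))
    (hS : ∀ π ∈ S, ∀ τ ∈ S, ∃ x, π x = τ x)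
    (hmax : S.card = Nat.card (Subgroup.zpowers σ) / r₁) :
    ∃ g ∈ Subgroup.zpowers σ, ∃ x : Fin n, Function.minimalPeriod (⇑σ) x = r₁ ∧
      (↑S : Set (Equiv.Perm (Fin n))) =
        (fun h => g * h) '' {h : Equiv.Perm (Fin n) | h ∈ Subgroup.zpowers σ ∧ h x = x} := by
  classical
  set N := orderOf σ with hN_def
  have hNpos : 0 < N := orderOf_pos σ
  haveI : NeZero N := ⟨hNpos.ne'⟩
  obtain ⟨x₀, hx₀⟩ := hr₁.1
  -- every point is periodic with period dividing N
  have hper : ∀ x : Fin n, Function.IsPeriodicPt (⇑σ) N x := by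
    intro x
    have : (⇑σ)^[N] x = x := by
      rw [← Equiv.Perm.coe_pow, pow_orderOf_eq_one]
      rfl
    exact this
  have hmpdvd : ∀ x : Fin n, Function.minimalPeriod (⇑σ) x ∣ N := fun x =>
    (hper x).minimalPeriod_dvd
  have hr₁pos : 0 < r₁ := by
    rw [← hx₀]
    exact Function.minimalPeriod_pos_of_mem_periodicPts ⟨N, hNpos, hper x₀⟩
  have hdvd : r₁ ∣ N := hx₀ ▸ hmpdvd x₀
  have hmin : ∀ x : Fin n, r₁ ≤ Function.minimalPeriod (⇑σ) x := fun x => hr₁.2 ⟨x, rfl⟩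
  set M := N / r₁ with hM_def
  have hM : N = M * r₁ := (Nat.div_mul_cancel hdvd).symm
  have hMpos : 0 < M := Nat.div_pos (Nat.le_of_dvd hNpos hdvd) hr₁pos
  have hScard : S.card = M := by rw [hmax, Nat.card_zpowers]
  have hSne : S.Nonempty := Finset.card_pos.mp (by omega)
  obtain ⟨π₀, hπ₀⟩ := hSne
  have hπ₀G : π₀ ∈ Subgroup.zpowers σ := hSG hπ₀
  -- every element of ⟨σ⟩ is σ ^ k.val for some k : ZMod N
  have hexp : ∀ τ ∈ Subgroup.zpowers σ, ∃ k : ZMod N, σ ^ k.val = τ := by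
    intro τ hτ
    obtain ⟨m, hm⟩ := Subgroup.mem_zpowers_iff.mp hτ
    refine ⟨(m : ZMod N), ?_⟩
    have h1 : ((((m : ZMod N)).val : ℤ) : ZMod N) = (m : ZMod N) := by
      rw [Int.cast_natCast, ZMod.natCast_val, ZMod.cast_id]
    have h2 : ((((m : ZMod N)).val : ℤ)) ≡ m [ZMOD (N : ℕ)] := by
      rwa [ZMod.intCast_eq_intCast_iff] at h1
    have h3 : σ ^ (((m : ZMod N)).val : ℤ) = σ ^ m := by
      rw [zpow_eq_zpow_iff_modEq]
      exact h2
    rw [← hm, ← h3, zpow_natCast]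
  -- pow of σ fixes x iff minimal period divides exponent
  have hfix : ∀ (x : Fin n) (j : ℕ), (σ ^ j) x = x ↔ Function.minimalPeriod (⇑σ) x ∣ j := by
    intro x j
    constructor
    · intro h
      exact Function.IsPeriodicPt.minimalPeriod_dvd h
    · intro h
      obtain ⟨c, hc⟩ := h
      have := (Function.isPeriodicPt_minimalPeriod (⇑σ) x).mul_const c
      rw [← hc] at this
      exact this
  set T : Finset (ZMod N) := Finset.univ.filter (fun k => π₀ * σ ^ k.val ∈ S) with hT_def
  have hTmem : ∀ k : ZMod N, k ∈ T ↔ π₀ * σ ^ k.val ∈ S := by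
    intro k; simp [hT_def]
  have hT0 : (0 : ZMod N) ∈ T := by
    rw [hTmem, ZMod.val_zero, pow_zero, mul_one]
    exact hπ₀
  -- T maps bijectively to S
  have hpowinj : ∀ s t : ZMod N, σ ^ s.val = σ ^ t.val → s = t := by
    intro s t h
    rw [pow_inj_mod] at h
    rw [Nat.mod_eq_of_lt (ZMod.val_lt s), Nat.mod_eq_of_lt (ZMod.val_lt t)] at h
    exact ZMod.val_injective N h
  have hTcard : T.card = M := by
    rw [← hScard]
    apply Finset.card_bij (fun k _ => π₀ * σ ^ k.val)
    · intro k hk; exact (hTmem k).mp hk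
    · intro s hs t ht h
      exact hpowinj s t (mul_left_cancel h)
    · intro π hπ
      obtain ⟨k, hk⟩ := hexp (π₀⁻¹ * π) (mul_mem (inv_mem hπ₀G) (hSG hπ))
      refine ⟨k, ?_, ?_⟩
      · rw [hTmem, hk, mul_inv_cancel_left]; exact hπ
      · rw [hk, mul_inv_cancel_left]
  -- gap property
  have hgap : ∀ t ∈ T, ∀ s ∈ T, t ≠ s → r₁ ≤ (t - s).val := by
    intro t ht s hs hne
    rw [hTmem] at ht hs
    obtain ⟨x, hx⟩ := hS _ ht _ hs
    have hx' : (σ ^ t.val) x = (σ ^ s.val) x := by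
      have := hx
      simp only [Equiv.Perm.mul_apply] at this
      exact π₀.injective this
    set r := Function.minimalPeriod (⇑σ) x with hr_def
    have hrr₁ : r₁ ≤ r := hmin x
    have hrN : r ∣ N := hmpdvd x
    have hvne : t.val ≠ s.val := fun h => hne (ZMod.val_injective N h)
    have hsub : ∀ a b : ZMod N, b.val < a.val → (a - b).val = a.val - b.val := by
      intro a b h
      have h1 : ((a.val - b.val : ℕ) : ZMod N) = a - b := by
        rw [Nat.cast_sub h.le, ZMod.natCast_val, ZMod.natCast_val, ZMod.cast_id, ZMod.cast_id]
      rw [← h1, ZMod.val_cast_of_lt (lt_of_le_of_lt (Nat.sub_le _ _) (ZMod.val_lt a))]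
    have hdiff : ∀ a b : ℕ, b ≤ a → (σ ^ a) x = (σ ^ b) x → r ∣ a - b := by
      intro a b hba h
      have h2 : (σ ^ b) ((σ ^ (a - b)) x) = (σ ^ b) x := by
        rw [← Equiv.Perm.mul_apply, ← pow_add]
        rw [Nat.add_sub_cancel' hba]
        exact h
      have h3 : (σ ^ (a - b)) x = x := (σ ^ b).injective h2
      exact ((hfix x (a - b)).mp h3)
    rcases Nat.lt_or_ge s.val t.val with h | h
    · have hd := hdiff t.val s.val h.le hx'
      rw [hsub t s h]
      have := Nat.le_of_dvd (by omega) hd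
      omega
    · have hlt : t.val < s.val := by omega
      have hd := hdiff s.val t.val hlt.le hx'.symm
      have hwv : (t - s).val = t.val + (N - s.val) := by
        have h1 : ((t.val + (N - s.val) : ℕ) : ZMod N) = t - s := by
          rw [Nat.cast_add, Nat.cast_sub (ZMod.val_lt s).le, ZMod.natCast_self,
            ZMod.natCast_val, ZMod.natCast_val, ZMod.cast_id, ZMod.cast_id]
          ring
        have h2 : t.val + (N - s.val) < N := by
          have := ZMod.val_lt s
          omega
        rw [← h1, ZMod.val_cast_of_lt h2]
      rw [hwv]
      have hdN : r ∣ t.val + (N - s.val) := by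
        have h5 : t.val + (N - s.val) = N - (s.val - t.val) := by
          have := ZMod.val_lt s
          omega
        rw [h5]
        exact Nat.dvd_sub hrN hd
      have hpos : 0 < t.val + (N - s.val) := by
        have := ZMod.val_lt s
        omega
      have := Nat.le_of_dvd hpos hdN
      omega
  have hiff := ekr_combin N r₁ M hNpos hr₁pos hM T hT0 hTcard hgap
  refine ⟨π₀, hπ₀G, x₀, hx₀, ?_⟩
  ext π
  simp only [Finset.coe_sort_coe, Set.mem_image, Set.mem_setOf_eq, Finset.mem_coe]
  constructor
  · intro hπ
    obtain ⟨k, hk⟩ := hexp (π₀⁻¹ * π) (mul_mem (inv_mem hπ₀G) (hSG hπ))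
    have hkT : k ∈ T := by
      rw [hTmem, hk, mul_inv_cancel_left]; exact hπ
    have hdvdk : r₁ ∣ k.val := (hiff k).mp hkT
    refine ⟨π₀⁻¹ * π, ⟨mul_mem (inv_mem hπ₀G) (hSG hπ), ?_⟩, by group⟩
    rw [← hk]
    exact (hfix x₀ k.val).mpr (hx₀ ▸ hdvdk)
  · rintro ⟨h, ⟨hhG, hhx⟩, rfl⟩
    obtain ⟨k, hk⟩ := hexp h hhG
    have hdvdk : r₁ ∣ k.val := by
      rw [← hx₀]
      exact (hfix x₀ k.val).mp (by rw [hk]; exact hhx)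
    have hkT : k ∈ T := (hiff k).mpr hdvdk
    rw [hTmem, hk] at hkT
    exact hkT
end

section
/- For n ≥ 3, the dihedral group D_n ≤ Sym(n) (symmetries of a regular n-gon acting on its n vertices) has the strict EKR property: the maximum size of an intersecting subset is 2, and every intersecting subset of size 2 is a coset of the stabilizer of a point. -/
lemma ekr_two_ne_zero (n : ℕ) (hn : 3 ≤ n) : (2 : ZMod n) ≠ 0 := by
  haveI : NeZero n := ⟨by omega⟩
  intro h
  have h2 : ((2 : ℕ) : ZMod n) = 0 := by exact_mod_cast h
  have := (ZMod.natCast_eq_zero_iff 2 n).mp h2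
  have := Nat.le_of_dvd two_pos this
  omega

lemma ekr_mem_char (n : ℕ) (g : Equiv.Perm (ZMod n))
    (hg : g ∈ Subgroup.closure {Equiv.addRight (1 : ZMod n), Equiv.neg (ZMod n)}) :
    ∃ a : ZMod n, (∀ x, g x = x + a) ∨ (∀ x, g x = a - x) := by
  induction hg using Subgroup.closure_induction with
  | mem g hg =>
    rcases hg with rfl | rfl
    · exact ⟨1, Or.inl fun x => rfl⟩
    · exact ⟨0, Or.inr fun x => by simp⟩
  | one => exact ⟨0, Or.inl fun x => by simp⟩
  | mul f g _ _ hf hg =>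
    obtain ⟨a, ha | ha⟩ := hf <;> obtain ⟨b, hb⟩ := hg
    · rcases hb with hb | hb
      · exact ⟨b + a, Or.inl fun x => by simp [Equiv.Perm.mul_apply, ha, hb, add_assoc]⟩
      · exact ⟨b + a, Or.inr fun x => by simp [Equiv.Perm.mul_apply, ha, hb]; ring⟩
    · rcases hb with hb | hb
      · exact ⟨a - b, Or.inr fun x => by simp [Equiv.Perm.mul_apply, ha, hb]; ring⟩
      · exact ⟨a - b, Or.inl fun x => by simp [Equiv.Perm.mul_apply, ha, hb]; ring⟩
  | inv g _ hg =>
    obtain ⟨a, ha | ha⟩ := hg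
    · refine ⟨-a, Or.inl fun x => g.injective ?_⟩
      rw [Equiv.Perm.coe_inv, Equiv.apply_symm_apply, ha]; ring
    · refine ⟨a, Or.inr fun x => g.injective ?_⟩
      rw [Equiv.Perm.coe_inv, Equiv.apply_symm_apply, ha]; ring

/-- The dihedral group Dₙ ≤ Sym(n) (acting on the n vertices of a regular n-gon,
identified with ZMod n, generated by the rotation x ↦ x + 1 and the reflection
x ↦ -x) has the strict EKR property: the maximum size of an intersecting subset
is 2, and every intersecting subset of size 2 is a coset of a point-stabilizer. -/
theorem stmt_4 (n : ℕ) (hn : 3 ≤ n) (D : Subgroup (Equiv.Perm (ZMod n)))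
    (hD : D = Subgroup.closure {Equiv.addRight (1 : ZMod n), Equiv.neg (ZMod n)}) :
    IsGreatest {m : ℕ | ∃ S : Finset (Equiv.Perm (ZMod n)),
        ↑S ⊆ (D : Set (Equiv.Perm (ZMod n))) ∧
        (∀ π ∈ S, ∀ τ ∈ S, ∃ x, π x = τ x) ∧ S.card = m} 2 ∧
    ∀ S : Finset (Equiv.Perm (ZMod n)), ↑S ⊆ (D : Set (Equiv.Perm (ZMod n))) →
      (∀ π ∈ S, ∀ τ ∈ S, ∃ x, π x = τ x) → S.card = 2 →
      ∃ g ∈ D, ∃ x : ZMod n,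
        (↑S : Set (Equiv.Perm (ZMod n))) =
          (fun h => g * h) '' {h : Equiv.Perm (ZMod n) | h ∈ D ∧ h x = x} := by
  classical
  have h2ne : (2 : ZMod n) ≠ 0 := ekr_two_ne_zero n hn
  have hchar : ∀ g ∈ D, ∃ a : ZMod n, (∀ x, g x = x + a) ∨ (∀ x, g x = a - x) := by
    intro g hg
    exact ekr_mem_char n g (hD ▸ hg)
  -- no permutation is both a rotation and a reflection
  have hnotboth : ∀ g : Equiv.Perm (ZMod n), ∀ a b : ZMod n,
      (∀ x, g x = x + a) → ¬(∀ x, g x = b - x) := by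
    intro g a b ha hb
    have h1 := (ha 1).symm.trans (hb 1)
    have h0 := (ha 0).symm.trans (hb 0)
    apply h2ne
    have hb0 : a = b := by simpa using h0
    rw [← hb0] at h1
    linear_combination h1
  -- two rotations or two reflections agreeing somewhere are equal
  have hsame : ∀ g h : Equiv.Perm (ZMod n),
      (∃ a : ZMod n, (∀ x, g x = x + a) ∧ ∀ x, h x = x + a → True) → True := fun _ _ _ => trivial
  have huniq : ∀ (g h : Equiv.Perm (ZMod n)) (x : ZMod n), g x = h x →
      ((∃ a, ∀ y, g y = y + a) ∧ (∃ b, ∀ y, h y = y + b)) ∨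
      ((∃ a, ∀ y, g y = a - y) ∧ (∃ b, ∀ y, h y = b - y)) → g = h := by
    rintro g h x hx (⟨⟨a, ha⟩, ⟨b, hb⟩⟩ | ⟨⟨a, ha⟩, ⟨b, hb⟩⟩)
    · have : a = b := by
        have := (ha x).symm.trans (hx.trans (hb x))
        exact add_left_cancel this
      exact Equiv.ext fun y => by rw [ha, hb, this]
    · have : a = b := by
        have := (ha x).symm.trans (hx.trans (hb x))
        simpa [sub_left_inj] using this
      exact Equiv.ext fun y => by rw [ha, hb, this]
  constructor
  · constructor
    · -- 2 is attained
      refine ⟨{1, Equiv.neg (ZMod n)}, ?_, ?_, ?_⟩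
      · intro g hg
        simp only [Finset.coe_insert, Finset.coe_singleton, Set.mem_insert_iff,
          Set.mem_singleton_iff] at hg
        rcases hg with rfl | rfl
        · exact one_mem D
        · rw [hD]; exact Subgroup.subset_closure (by simp)
      · have hfix : ∀ π ∈ ({1, Equiv.neg (ZMod n)} : Finset (Equiv.Perm (ZMod n))),
            π 0 = 0 := by
          intro π hπ
          rcases Finset.mem_insert.mp hπ with rfl | hπ
          · rfl
          · rw [Finset.mem_singleton.mp hπ]; simp
        intro π hπ τ hτ
        exact ⟨0, (hfix π hπ).trans (hfix τ hτ).symm⟩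
      · rw [Finset.card_insert_of_notMem, Finset.card_singleton]
        simp only [Finset.mem_singleton]
        intro h
        have : (1 : ZMod n) = -1 := by
          have := congrArg (fun e : Equiv.Perm (ZMod n) => e 1) h
          simpa using this
        apply h2ne
        calc (2 : ZMod n) = 1 + 1 := by norm_num
          _ = -1 + 1 := by rw [← this]
          _ = 0 := by ring
    · -- 2 is an upper bound
      rintro m ⟨S, hSD, hSint, rfl⟩
      have : S.card ≤ (Finset.univ : Finset Bool).card := by
        apply Finset.card_le_card_of_injOn
          (fun g => decide (∃ a : ZMod n, ∀ y, g y = y + a))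
        · intro g _; exact Finset.mem_univ _
        · intro g hg h hh heq
          simp only [Finset.mem_coe] at hg hh
          obtain ⟨x, hx⟩ := hSint g hg h hh
          obtain ⟨a, hga⟩ := hchar g (hSD hg)
          obtain ⟨b, hhb⟩ := hchar h (hSD hh)
          simp only [decide_eq_decide] at heq
          by_cases hrot : ∃ a : ZMod n, ∀ y, g y = y + a
          · have hrot' : ∃ b : ZMod n, ∀ y, h y = y + b := heq.mp hrot
            exact huniq g h x hx (Or.inl ⟨hrot, hrot'⟩)
          · have hrot' : ¬∃ b : ZMod n, ∀ y, h y = y + b := fun q => hrot (heq.mpr q)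
            have hgr : ∀ y, g y = a - y := by
              rcases hga with h' | h'
              · exact absurd ⟨a, h'⟩ hrot
              · exact h'
            have hhr : ∀ y, h y = b - y := by
              rcases hhb with h' | h'
              · exact absurd ⟨b, h'⟩ hrot'
              · exact h'
            exact huniq g h x hx (Or.inr ⟨⟨a, hgr⟩, ⟨b, hhr⟩⟩)
      simpa using this
  · -- strictness
    intro S hSD hSint hcard
    obtain ⟨π, τ, hne, rfl⟩ := Finset.card_eq_two.mp hcard
    have hπD : π ∈ D := hSD (by simp)
    have hτD : τ ∈ D := hSD (by simp)
    obtain ⟨x, hx⟩ := hSint π (by simp) τ (by simp)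
    refine ⟨π, hπD, x, ?_⟩
    set κ := π⁻¹ * τ with hκ
    have hκD : κ ∈ D := mul_mem (inv_mem hπD) hτD
    have hκx : κ x = x := by
      simp only [hκ, Equiv.Perm.mul_apply, ← hx, Equiv.Perm.coe_inv, Equiv.symm_apply_apply]
    have hκne : κ ≠ 1 := by
      intro h
      apply hne
      have : π * κ = π * 1 := by rw [h]
      simpa [hκ] using this.symm
    -- κ is a reflection fixing x, with formula y ↦ (x + x) - y
    have hκform : ∀ y, κ y = (x + x) - y := by
      obtain ⟨a, ha | ha⟩ := hchar κ hκD
      · exfalso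
        apply hκne
        have ha0 : a = 0 := by
          have := (ha x).symm.trans hκx
          simpa using this.symm
        exact Equiv.ext fun y => by rw [ha, ha0, add_zero]; rfl
      · have haform : a = x + x := by
          have h1 : a - x = x := (ha x).symm.trans hκx
          calc a = a - x + x := by ring
            _ = x + x := by rw [h1]
        exact fun y => by rw [ha, haform]
    ext h'
    simp only [Finset.coe_insert, Finset.coe_singleton, Set.mem_insert_iff,
      Set.mem_singleton_iff, Set.mem_image, Set.mem_setOf_eq]
    constructor
    · rintro (rfl | rfl)
      · exact ⟨1, ⟨one_mem D, rfl⟩, mul_one _⟩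
      · refine ⟨κ, ⟨hκD, hκx⟩, ?_⟩
        simp [hκ]
    · rintro ⟨k, ⟨hkD, hkx⟩, rfl⟩
      obtain ⟨a, ha | ha⟩ := hchar k hkD
      · left
        have ha0 : a = 0 := by
          have := (ha x).symm.trans hkx
          simpa using this.symm
        have : k = 1 := Equiv.ext fun y => by rw [ha, ha0, add_zero]; rfl
        rw [this, mul_one]
      · right
        have haform : a = x + x := by
          have h1 := (ha x).symm.trans hkx
          calc a = a - x + x := by ring
            _ = x + x := by rw [h1]
        have : k = κ := Equiv.ext fun y => by rw [ha, haform, hκform]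
        rw [this, hκ]
        simp
end

section
/- Let G = KH ≤ Sym(n) be a Frobenius group with kernel K and complement H. Then G has the strict EKR property (every maximum intersecting subset is a coset of a point-stabilizer) if and only if |H| = 2. -/
open Finset
open scoped Classical

variable {n : ℕ}

noncomputable def stabF (G : Subgroup (Equiv.Perm (Fin n))) (x : Fin n) :
    Finset (Equiv.Perm (Fin n)) :=
  Finset.univ.filter (fun g => g ∈ G ∧ g x = x)

lemma mem_stabF {G : Subgroup (Equiv.Perm (Fin n))} {x : Fin n} {g : Equiv.Perm (Fin n)} :
    g ∈ stabF G x ↔ g ∈ G ∧ g x = x := by simp [stabF]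

lemma one_mem_stabF {G : Subgroup (Equiv.Perm (Fin n))} {x : Fin n} :
    (1 : Equiv.Perm (Fin n)) ∈ stabF G x := mem_stabF.2 ⟨G.one_mem, rfl⟩

lemma stabF_coe {G : Subgroup (Equiv.Perm (Fin n))} {x : Fin n} :
    {h : Equiv.Perm (Fin n) | h ∈ G ∧ h x = x} = ↑(stabF G x) := by
  ext g; simp [stabF]

lemma stabF_card_le (G : Subgroup (Equiv.Perm (Fin n))) {x x' : Fin n}
    {g₀ : Equiv.Perm (Fin n)} (hg₀ : g₀ ∈ G) (hgx : g₀ x = x') :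
    (stabF G x).card ≤ (stabF G x').card := by
  apply Finset.card_le_card_of_injOn (fun h => g₀ * h * g₀⁻¹)
  · intro h hh
    rw [Finset.mem_coe, mem_stabF] at hh ⊢
    refine ⟨G.mul_mem (G.mul_mem hg₀ hh.1) (G.inv_mem hg₀), ?_⟩
    subst hgx
    simp [Equiv.Perm.mul_apply, hh.2]
  · intro a _ b _ hab
    simpa using mul_left_cancel (mul_right_cancel hab)

lemma stabF_card_eq (G : Subgroup (Equiv.Perm (Fin n)))
    (htrans : ∀ x y : Fin n, ∃ g ∈ G, g x = y) (x x' : Fin n) :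
    (stabF G x).card = (stabF G x').card := by
  obtain ⟨g₀, hg₀, hgx⟩ := htrans x x'
  obtain ⟨g₁, hg₁, hgx'⟩ := htrans x' x
  exact le_antisymm (stabF_card_le G hg₀ hgx) (stabF_card_le G hg₁ hgx')



noncomputable def GFin (G : Subgroup (Equiv.Perm (Fin n))) : Finset (Equiv.Perm (Fin n)) :=
  Finset.univ.filter (· ∈ G)

lemma mem_GFin {G : Subgroup (Equiv.Perm (Fin n))} {g : Equiv.Perm (Fin n)} :
    g ∈ GFin G ↔ g ∈ G := by simp [GFin]

-- orbit stabilizer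
lemma GFin_card (G : Subgroup (Equiv.Perm (Fin n)))
    (htrans : ∀ x y : Fin n, ∃ g ∈ G, g x = y) (y : Fin n) :
    (GFin G).card = n * (stabF G y).card := by
  rw [Finset.card_eq_sum_card_fiberwise (f := fun g => g y) (t := Finset.univ)
    (fun x _ => Finset.mem_univ _)]
  have key : ∀ x : Fin n, ((GFin G).filter (fun g => g y = x)).card = (stabF G y).card := by
    intro x
    obtain ⟨g₀, hg₀, hgx⟩ := htrans y x
    apply Finset.card_bij (fun g _ => g₀⁻¹ * g)
    · intro g hg
      simp only [mem_filter, mem_GFin] at hg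
      rw [mem_stabF]
      refine ⟨G.mul_mem (G.inv_mem hg₀) hg.1, ?_⟩
      rw [Equiv.Perm.mul_apply, hg.2, ← hgx, Equiv.Perm.coe_inv, Equiv.symm_apply_apply]
    · intro a _ b _ hab
      exact mul_left_cancel hab
    · intro h hh
      rw [mem_stabF] at hh
      refine ⟨g₀ * h, ?_, by group⟩
      simp only [mem_filter, mem_GFin]
      exact ⟨G.mul_mem hg₀ hh.1, by rw [Equiv.Perm.mul_apply, hh.2, hgx]⟩
  rw [Finset.sum_congr rfl (fun x _ => key x), Finset.sum_const, card_univ, Fintype.card_fin,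
    smul_eq_mul]



lemma ND_card (G : Subgroup (Equiv.Perm (Fin n)))
    (htrans : ∀ x y : Fin n, ∃ g ∈ G, g x = y)
    (hfrob : ∀ g ∈ G, g ≠ 1 → ∀ x y : Fin n, g x = x → g y = y → x = y)
    (y : Fin n)
    (hcards : ∀ x, (stabF G x).card = (stabF G y).card) :
    (Finset.univ.filter
        (fun g : Equiv.Perm (Fin n) => g ∈ G ∧ g ≠ 1 ∧ ∃ z, g z = z)).card
      = n * ((stabF G y).card - 1) := by
  set f : Equiv.Perm (Fin n) → Fin n :=
    fun g => if h : ∃ z, g z = z then h.choose else y with hf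
  rw [Finset.card_eq_sum_card_fiberwise (f := f) (t := Finset.univ)
    (fun x _ => Finset.mem_univ _)]
  have key : ∀ x : Fin n,
      ((Finset.univ.filter
        (fun g : Equiv.Perm (Fin n) => g ∈ G ∧ g ≠ 1 ∧ ∃ z, g z = z)).filter
          (fun g => f g = x)) = (stabF G x).erase 1 := by
    intro x
    ext g
    simp only [mem_filter, mem_univ, true_and, mem_erase, mem_stabF]
    constructor
    · rintro ⟨⟨hG, hne, hfix⟩, hfg⟩
      refine ⟨hne, hG, ?_⟩
      have h1 : g (f g) = f g := by rw [hf]; simp only [dif_pos hfix]; exact hfix.choose_spec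
      rw [hfg] at h1; exact h1
    · rintro ⟨hne, hG, hx⟩
      have hfix : ∃ z, g z = z := ⟨x, hx⟩
      refine ⟨⟨hG, hne, hfix⟩, ?_⟩
      have h1 : g (f g) = f g := by rw [hf]; simp only [dif_pos hfix]; exact hfix.choose_spec
      exact hfrob g hG hne _ _ h1 hx
  calc ∑ x : Fin n, ((Finset.univ.filter
        (fun g : Equiv.Perm (Fin n) => g ∈ G ∧ g ≠ 1 ∧ ∃ z, g z = z)).filter
          (fun g => f g = x)).card
      = ∑ x : Fin n, ((stabF G y).card - 1) := by
        refine Finset.sum_congr rfl (fun x _ => ?_)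
        rw [key x, Finset.card_erase_of_mem one_mem_stabF, hcards x]
    _ = n * ((stabF G y).card - 1) := by
        rw [Finset.sum_const, card_univ, Fintype.card_fin, smul_eq_mul]



lemma derangement_bound (G : Subgroup (Equiv.Perm (Fin n))) (y : Fin n)
    (h1 : (GFin G).card = n * (stabF G y).card)
    (h2 : (Finset.univ.filter
        (fun g : Equiv.Perm (Fin n) => g ∈ G ∧ g ≠ 1 ∧ ∃ z, g z = z)).card
      = n * ((stabF G y).card - 1)) :
    (Finset.univ.filter
        (fun g : Equiv.Perm (Fin n) => g ∈ G ∧ ∀ z, g z ≠ z)).card ≤ n - 1 := by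
  set D := Finset.univ.filter (fun g : Equiv.Perm (Fin n) => g ∈ G ∧ ∀ z, g z ≠ z) with hD
  set ND := Finset.univ.filter
    (fun g : Equiv.Perm (Fin n) => g ∈ G ∧ g ≠ 1 ∧ ∃ z, g z = z) with hND
  have hdisj : Disjoint D ND := by
    rw [Finset.disjoint_left]
    rintro g hg hg'
    simp only [hD, hND, mem_filter] at hg hg'
    obtain ⟨z, hz⟩ := hg'.2.2.2
    exact hg.2.2 z hz
  have hsub : D ∪ ND ⊆ (GFin G).erase 1 := by
    intro g hg
    rw [Finset.mem_union] at hg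
    rw [Finset.mem_erase, mem_GFin]
    rcases hg with hg | hg <;> simp only [hD, hND, mem_filter] at hg
    · exact ⟨fun h => hg.2.2 y (by rw [h]; rfl), hg.2.1⟩
    · exact ⟨hg.2.2.1, hg.2.1⟩
  have hcard : D.card + ND.card ≤ (GFin G).card - 1 := by
    rw [← Finset.card_union_of_disjoint hdisj]
    calc (D ∪ ND).card ≤ ((GFin G).erase 1).card := Finset.card_le_card hsub
      _ = (GFin G).card - 1 := Finset.card_erase_of_mem (mem_GFin.2 G.one_mem)
  have ha1 : 1 ≤ (stabF G y).card := Finset.card_pos.2 ⟨1, one_mem_stabF⟩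
  obtain ⟨b, hb⟩ : ∃ b, (stabF G y).card = b + 1 := ⟨_, (Nat.succ_pred_eq_of_pos ha1).symm⟩
  rw [h1, hb] at hcard
  rw [h2, hb] at hcard
  simp only [Nat.add_sub_cancel, Nat.mul_add, Nat.mul_one] at hcard ⊢
  omega



lemma good_exists (G : Subgroup (Equiv.Perm (Fin n))) (y : Fin n)
    (h1 : (GFin G).card = n * (stabF G y).card)
    (hD : (Finset.univ.filter
        (fun g : Equiv.Perm (Fin n) => g ∈ G ∧ ∀ z, g z ≠ z)).card ≤ n - 1)
    (ha : 3 ≤ (stabF G y).card) (hn : 2 ≤ n) {h₀ : Equiv.Perm (Fin n)}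
    (hh₀ : h₀ ∈ stabF G y) :
    ∃ g ∈ G, g ∉ stabF G y ∧
      ∀ h'' ∈ (stabF G y).erase h₀, ∃ z, g z = h'' z := by
  set a := (stabF G y).card with haa
  set E := (stabF G y).erase h₀ with hE
  set Good := (GFin G).filter (fun g => ∀ h'' ∈ E, ∃ z, g z = h'' z) with hGood
  -- bad sets
  have hbad : ∀ h'' ∈ E, (Finset.univ.filter
      (fun g : Equiv.Perm (Fin n) => g ∈ G ∧ ∀ z, g z ≠ h'' z)).card ≤ n - 1 := by
    intro h'' hh''
    have hh''G : h'' ∈ G := (mem_stabF.1 (Finset.mem_of_mem_erase hh'')).1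
    refine le_trans ?_ hD
    apply Finset.card_le_card_of_injOn (fun g => g⁻¹ * h'')
    · intro g hg
      simp only [Finset.coe_filter, Set.mem_setOf_eq, mem_univ, true_and] at hg ⊢
      refine ⟨G.mul_mem (G.inv_mem hg.1) hh''G, fun z hz => ?_⟩
      apply hg.2 z
      rw [Equiv.Perm.mul_apply] at hz
      have := congrArg g hz
      rw [Equiv.Perm.coe_inv, Equiv.apply_symm_apply] at this
      exact this.symm
    · intro u _ v _ huv
      have := mul_right_cancel huv
      simpa using congrArg (·⁻¹) this
  have hsub : GFin G ⊆ Good ∪ E.biUnion (fun h'' => Finset.univ.filter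
      (fun g : Equiv.Perm (Fin n) => g ∈ G ∧ ∀ z, g z ≠ h'' z)) := by
    intro g hg
    rw [Finset.mem_union]
    by_cases hgood : ∀ h'' ∈ E, ∃ z, g z = h'' z
    · exact Or.inl (Finset.mem_filter.2 ⟨hg, hgood⟩)
    · push_neg at hgood
      obtain ⟨h'', hh'', hz⟩ := hgood
      exact Or.inr (Finset.mem_biUnion.2 ⟨h'', hh'', Finset.mem_filter.2
        ⟨Finset.mem_univ _, mem_GFin.1 hg, hz⟩⟩)
  have hEcard : E.card = a - 1 := Finset.card_erase_of_mem hh₀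
  have hbadU : (E.biUnion (fun h'' => Finset.univ.filter
      (fun g : Equiv.Perm (Fin n) => g ∈ G ∧ ∀ z, g z ≠ h'' z))).card
        ≤ (a - 1) * (n - 1) := by
    calc _ ≤ ∑ h'' ∈ E, (Finset.univ.filter
          (fun g : Equiv.Perm (Fin n) => g ∈ G ∧ ∀ z, g z ≠ h'' z)).card :=
        Finset.card_biUnion_le
      _ ≤ ∑ _h'' ∈ E, (n - 1) := Finset.sum_le_sum hbad
      _ = (a - 1) * (n - 1) := by rw [Finset.sum_const, smul_eq_mul, hEcard]
  have hGoodcard : n * a ≤ Good.card + (a - 1) * (n - 1) := by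
    calc n * a = (GFin G).card := h1.symm
      _ ≤ (Good ∪ _).card := Finset.card_le_card hsub
      _ ≤ Good.card + _ := Finset.card_union_le _ _
      _ ≤ Good.card + (a - 1) * (n - 1) := by exact Nat.add_le_add_left hbadU _
  -- Good is bigger than stabF y
  have hnotsub : ¬ (Good ⊆ stabF G y) := by
    intro hss
    have : Good.card ≤ a := Finset.card_le_card hss
    obtain ⟨A, hA⟩ : ∃ A, a = A + 1 := ⟨a - 1, by omega⟩
    obtain ⟨N, hN⟩ : ∃ N, n = N + 1 := ⟨n - 1, by omega⟩
    have e1 : n * a = A * N + N + A + 1 := by rw [hA, hN]; ring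
    have e2 : (a - 1) * (n - 1) = A * N := by rw [hA, hN]; simp
    rw [e1, e2] at hGoodcard
    omega
  obtain ⟨g, hg, hgns⟩ := Finset.not_subset.1 hnotsub
  rw [hGood, Finset.mem_filter, mem_GFin] at hg
  exact ⟨g, hg.1, hgns, hg.2⟩



lemma stab_pair {G : Subgroup (Equiv.Perm (Fin n))} {x : Fin n}
    (hcard : (stabF G x).card = 2) {u : Equiv.Perm (Fin n)}
    (huG : u ∈ G) (hu1 : u ≠ 1) (hux : u x = x) :
    stabF G x = {1, u} ∧ u * u = 1 := by
  have husub : ({1, u} : Finset (Equiv.Perm (Fin n))) ⊆ stabF G x := by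
    intro v hv
    rcases Finset.mem_insert.1 hv with rfl | hv
    · exact one_mem_stabF
    · rw [Finset.mem_singleton] at hv; subst hv
      exact mem_stabF.2 ⟨huG, hux⟩
  have hc2 : ({1, u} : Finset (Equiv.Perm (Fin n))).card = 2 := by
    rw [Finset.card_insert_of_notMem (by simpa using hu1.symm), Finset.card_singleton]
  have heq : ({1, u} : Finset (Equiv.Perm (Fin n))) = stabF G x :=
    Finset.eq_of_subset_of_card_le husub (by omega)
  have huu : u * u ∈ stabF G x :=
    mem_stabF.2 ⟨G.mul_mem huG huG, by rw [Equiv.Perm.mul_apply, hux, hux]⟩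
  rw [← heq] at huu
  rcases Finset.mem_insert.1 huu with h | h
  · exact ⟨heq.symm, h⟩
  · rw [Finset.mem_singleton] at h
    exact absurd (mul_right_cancel (h.trans (one_mul u).symm)) hu1

lemma no_three (G : Subgroup (Equiv.Perm (Fin n)))
    (hfrob : ∀ g ∈ G, g ≠ 1 → ∀ x y : Fin n, g x = x → g y = y → x = y)
    (hcards : ∀ x, (stabF G x).card = 2)
    {π τ σ : Equiv.Perm (Fin n)} (hπ : π ∈ G) (hτ : τ ∈ G) (hσ : σ ∈ G)
    (hπτ : π ≠ τ) (hπσ : π ≠ σ) (hτσ : τ ≠ σ)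
    (iπτ : ∃ x, π x = τ x) (iπσ : ∃ x, π x = σ x) (iτσ : ∃ x, τ x = σ x) :
    False := by
  set a := π⁻¹ * τ with hadef
  set b := π⁻¹ * σ with hbdef
  have haG : a ∈ G := G.mul_mem (G.inv_mem hπ) hτ
  have hbG : b ∈ G := G.mul_mem (G.inv_mem hπ) hσ
  have ha1 : a ≠ 1 := fun h => hπτ (inv_mul_eq_one.1 h)
  have hb1 : b ≠ 1 := fun h => hπσ (inv_mul_eq_one.1 h)
  obtain ⟨xa, hxa⟩ := iπτ
  obtain ⟨xb, hxb⟩ := iπσ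
  obtain ⟨xc, hxc⟩ := iτσ
  have haxa : a xa = xa := by
    rw [hadef, Equiv.Perm.mul_apply, ← hxa, Equiv.Perm.coe_inv, Equiv.symm_apply_apply]
  have hbxb : b xb = xb := by
    rw [hbdef, Equiv.Perm.mul_apply, ← hxb, Equiv.Perm.coe_inv, Equiv.symm_apply_apply]
  have hab : a ≠ b := by
    intro h; apply hτσ
    exact mul_left_cancel (a := π⁻¹) (by rw [← hadef, h, hbdef])
  -- c = a⁻¹ * b = τ⁻¹σ fixes xc
  have hcval : a⁻¹ * b = τ⁻¹ * σ := by
    rw [hadef, hbdef]; group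
  have hc1 : a⁻¹ * b ≠ 1 := by
    rw [hcval]; exact fun h => hτσ (inv_mul_eq_one.1 h)
  have hcxc : (a⁻¹ * b) xc = xc := by
    rw [hcval, Equiv.Perm.mul_apply, ← hxc, Equiv.Perm.coe_inv, Equiv.symm_apply_apply]
  have hcG : a⁻¹ * b ∈ G := G.mul_mem (G.inv_mem haG) hbG
  -- involutions
  have haa : a * a = 1 := (stab_pair (hcards xa) haG ha1 haxa).2
  have hbb : b * b = 1 := (stab_pair (hcards xb) hbG hb1 hbxb).2
  have hcc : (a⁻¹ * b) * (a⁻¹ * b) = 1 := (stab_pair (hcards xc) hcG hc1 hcxc).2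
  have hainv : a⁻¹ = a := by
    rw [eq_comm, eq_inv_iff_mul_eq_one]; exact haa
  have hbinv : b⁻¹ = b := by
    rw [eq_comm, eq_inv_iff_mul_eq_one]; exact hbb
  -- a and b commute
  have hcomm : a * b = b * a := by
    have h1 : (a * b) * (a * b) = 1 := by
      have := hcc; rwa [hainv] at this
    have h2 : a * b = (a * b)⁻¹ := (eq_inv_iff_mul_eq_one.2 h1)
    rw [h2, mul_inv_rev, hainv, hbinv]
  -- b fixes xa
  have hfix : a (b xa) = b xa := by
    have : (a * b) xa = (b * a) xa := by rw [hcomm]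
    simpa [Equiv.Perm.mul_apply, haxa] using this
  have hbxa : b xa = xa := hfrob a haG ha1 _ _ hfix haxa
  have hbstab : b ∈ stabF G xa := mem_stabF.2 ⟨hbG, hbxa⟩
  rw [(stab_pair (hcards xa) haG ha1 haxa).1] at hbstab
  rcases Finset.mem_insert.1 hbstab with h | h
  · exact hb1 h
  · exact hab (Finset.mem_singleton.1 h).symm

/-- A Frobenius group G ≤ Sym(n) with complement H (the stabilizer of a point y) has
the strict EKR property — every intersecting subset of maximum size is a coset of a
point-stabilizer — if and only if |H| = 2. -/
theorem stmt_8 (n : ℕ) (G : Subgroup (Equiv.Perm (Fin n)))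
    (htrans : ∀ x y : Fin n, ∃ g ∈ G, g x = y)
    (hfrob : ∀ g ∈ G, g ≠ 1 → ∀ x y : Fin n, g x = x → g y = y → x = y)
    (hex : ∃ g ∈ G, g ≠ 1 ∧ ∃ x, g x = x)
    (y : Fin n) :
    (∀ S : Finset (Equiv.Perm (Fin n)), ↑S ⊆ (G : Set (Equiv.Perm (Fin n))) →
        (∀ π ∈ S, ∀ τ ∈ S, ∃ x, π x = τ x) →
        (∀ T : Finset (Equiv.Perm (Fin n)), ↑T ⊆ (G : Set (Equiv.Perm (Fin n))) →
          (∀ π ∈ T, ∀ τ ∈ T, ∃ x, π x = τ x) → T.card ≤ S.card) →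
        ∃ g ∈ G, ∃ x : Fin n,
          (↑S : Set (Equiv.Perm (Fin n))) =
            (fun h => g * h) '' {h : Equiv.Perm (Fin n) | h ∈ G ∧ h x = x}) ↔
      Nat.card {g : Equiv.Perm (Fin n) // g ∈ G ∧ g y = y} = 2 := by
  classical
  have hbridge : Nat.card {g : Equiv.Perm (Fin n) // g ∈ G ∧ g y = y}
      = (stabF G y).card := by
    rw [Nat.card_eq_fintype_card, Fintype.card_subtype, stabF]
  have hcards : ∀ x x' : Fin n, (stabF G x).card = (stabF G x').card :=
    fun x x' => stabF_card_eq G htrans x x'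
  have ha2 : 2 ≤ (stabF G y).card := by
    obtain ⟨g, hG, hg1, x, hx⟩ := hex
    have hsub : ({1, g} : Finset (Equiv.Perm (Fin n))) ⊆ stabF G x := by
      intro v hv
      rcases Finset.mem_insert.1 hv with rfl | hv
      · exact one_mem_stabF
      · rw [Finset.mem_singleton] at hv; subst hv
        exact mem_stabF.2 ⟨hG, hx⟩
    calc 2 = ({1, g} : Finset (Equiv.Perm (Fin n))).card := by
          rw [Finset.card_insert_of_notMem (by simpa using hg1.symm),
            Finset.card_singleton]
      _ ≤ (stabF G x).card := Finset.card_le_card hsub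
      _ = (stabF G y).card := hcards x y
  have hn2 : 2 ≤ n := by
    by_contra h
    push_neg at h
    obtain ⟨g, _, hg1, _⟩ := hex
    apply hg1
    have hss : Subsingleton (Fin n) := by
      apply Fin.subsingleton_iff_le_one.2; omega
    apply Equiv.ext
    intro z
    exact @Subsingleton.elim _ hss _ _
  constructor
  · -- strict EKR → |H| = 2
    intro hEKR
    rw [hbridge]
    by_contra hne
    have ha3 : 3 ≤ (stabF G y).card := by omega
    obtain ⟨h₀, hh₀, hh₀1⟩ :=
      Finset.exists_mem_ne (show 1 < (stabF G y).card by omega) 1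
    have h1 := GFin_card G htrans y
    have h2 := ND_card G htrans hfrob y (fun x => hcards x y)
    have hD := derangement_bound G y h1 h2
    obtain ⟨g, hgG, hgns, hgood⟩ := good_exists G y h1 hD ha3 hn2 hh₀
    -- a maximum intersecting set exists; it's a coset, so max size = |stab|
    obtain ⟨S₀, hS₀mem, hS₀max⟩ := Finset.exists_max_image
      ((GFin G).powerset.filter (fun S => ∀ π ∈ S, ∀ τ ∈ S, ∃ x, π x = τ x))
      Finset.card ⟨∅, by simp⟩
    simp only [Finset.mem_filter, Finset.mem_powerset] at hS₀mem
    have hS₀sub : ↑S₀ ⊆ (G : Set (Equiv.Perm (Fin n))) :=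
      fun t ht => mem_GFin.1 (hS₀mem.1 ht)
    have hS₀maximum : ∀ T : Finset (Equiv.Perm (Fin n)),
        ↑T ⊆ (G : Set (Equiv.Perm (Fin n))) →
        (∀ π ∈ T, ∀ τ ∈ T, ∃ x, π x = τ x) → T.card ≤ S₀.card := by
      intro T hT hTint
      exact hS₀max T (Finset.mem_filter.2
        ⟨Finset.mem_powerset.2 (fun t ht => mem_GFin.2 (hT ht)), hTint⟩)
    obtain ⟨g₁, _, x₁, hx₁⟩ := hEKR S₀ hS₀sub hS₀mem.2 hS₀maximum
    have hS₀card : S₀.card = (stabF G y).card := by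
      have hset : (↑S₀ : Set (Equiv.Perm (Fin n)))
          = ↑((stabF G x₁).image (fun h => g₁ * h)) := by
        rw [hx₁, Finset.coe_image, stabF_coe]
      have hfe : S₀ = (stabF G x₁).image (fun h => g₁ * h) :=
        Finset.coe_injective hset
      rw [hfe, Finset.card_image_of_injective _ (mul_right_injective g₁), hcards x₁ y]
    -- the counterexample set S'
    set S' : Finset (Equiv.Perm (Fin n)) := insert g ((stabF G y).erase h₀) with hS'
    have hgE : g ∉ (stabF G y).erase h₀ := fun h => hgns (Finset.mem_of_mem_erase h)
    have hS'card : S'.card = (stabF G y).card := by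
      rw [hS', Finset.card_insert_of_notMem hgE, Finset.card_erase_of_mem hh₀]
      omega
    have hS'sub : ↑S' ⊆ (G : Set (Equiv.Perm (Fin n))) := by
      intro t ht
      rw [hS'] at ht
      simp only [Finset.coe_insert, Set.mem_insert_iff] at ht
      rcases ht with rfl | ht
      · exact hgG
      · exact (mem_stabF.1 (Finset.mem_of_mem_erase (Finset.mem_coe.1 ht))).1
    have hS'int : ∀ π ∈ S', ∀ τ ∈ S', ∃ x, π x = τ x := by
      intro π hπ τ hτ
      rw [hS', Finset.mem_insert] at hπ hτ
      rcases hπ with rfl | hπ <;> rcases hτ with rfl | hτ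
      · exact ⟨y, rfl⟩
      · exact hgood τ hτ
      · obtain ⟨z, hz⟩ := hgood π hπ; exact ⟨z, hz.symm⟩
      · exact ⟨y, by rw [(mem_stabF.1 (Finset.mem_of_mem_erase hπ)).2,
          (mem_stabF.1 (Finset.mem_of_mem_erase hτ)).2]⟩
    have hS'max : ∀ T : Finset (Equiv.Perm (Fin n)),
        ↑T ⊆ (G : Set (Equiv.Perm (Fin n))) →
        (∀ π ∈ T, ∀ τ ∈ T, ∃ x, π x = τ x) → T.card ≤ S'.card := by
      intro T hT hTint
      calc T.card ≤ S₀.card := hS₀maximum T hT hTint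
        _ = S'.card := by rw [hS₀card, hS'card]
    obtain ⟨g₂, _, x₂, hx₂⟩ := hEKR S' hS'sub hS'int hS'max
    -- derive a contradiction
    have h1S : (1 : Equiv.Perm (Fin n)) ∈ S' := by
      rw [hS']
      exact Finset.mem_insert_of_mem (Finset.mem_erase.2 ⟨Ne.symm hh₀1, one_mem_stabF⟩)
    have hmem : ∀ t ∈ S', ∃ h, (h ∈ G ∧ h x₂ = x₂) ∧ g₂ * h = t := by
      intro t ht
      have : t ∈ (fun h => g₂ * h) '' {h : Equiv.Perm (Fin n) | h ∈ G ∧ h x₂ = x₂} := by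
        rw [← hx₂]; exact Finset.mem_coe.2 ht
      obtain ⟨h, hh, heq⟩ := this
      exact ⟨h, hh, heq⟩
    obtain ⟨h₁, ⟨h₁G, h₁x⟩, h₁eq⟩ := hmem 1 h1S
    have hg₂x : g₂ x₂ = x₂ := by
      have hg₂ : g₂ = h₁⁻¹ := by rw [eq_inv_iff_mul_eq_one]; exact h₁eq
      rw [hg₂]
      have h' := congrArg (fun z => h₁⁻¹ z) h₁x
      simpa using h'.symm
    have hfixall : ∀ t ∈ S', t x₂ = x₂ := by
      intro t ht
      obtain ⟨h₂, ⟨h₂G, h₂x⟩, h₂eq⟩ := hmem t ht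
      rw [← h₂eq, Equiv.Perm.mul_apply, h₂x, hg₂x]
    obtain ⟨h'', hh''E, hh''1⟩ := Finset.exists_mem_ne
      (show 1 < ((stabF G y).erase h₀).card by
        rw [Finset.card_erase_of_mem hh₀]; omega) 1
    have hx₂y : x₂ = y :=
      hfrob h'' (mem_stabF.1 (Finset.mem_of_mem_erase hh''E)).1 hh''1 x₂ y
        (hfixall h'' (Finset.mem_insert_of_mem hh''E))
        (mem_stabF.1 (Finset.mem_of_mem_erase hh''E)).2
    exact hgns (mem_stabF.2 ⟨hgG, by
      rw [← hx₂y]; exact hfixall g (Finset.mem_insert_self _ _)⟩)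
  · -- |H| = 2 → strict EKR
    intro hcard2
    rw [hbridge] at hcard2
    intro S hSsub hSint hSmax
    have hstab2 : ∀ x : Fin n, (stabF G x).card = 2 :=
      fun x => (hcards x y).trans hcard2
    have hge : 2 ≤ S.card := by
      have hy := hSmax (stabF G y)
        (fun t ht => (mem_stabF.1 (Finset.mem_coe.1 ht)).1)
        (fun π hπ τ hτ => ⟨y, by rw [(mem_stabF.1 hπ).2, (mem_stabF.1 hτ).2]⟩)
      omega
    have hle : S.card ≤ 2 := by
      by_contra h
      obtain ⟨t, htS, ht3⟩ := Finset.exists_subset_card_eq (show 3 ≤ S.card by omega)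
      obtain ⟨π, τ, σ, hπτ, hπσ, hτσ, rfl⟩ := Finset.card_eq_three.1 ht3
      have hπS : π ∈ S := htS (by simp)
      have hτS : τ ∈ S := htS (by simp)
      have hσS : σ ∈ S := htS (by simp)
      exact no_three G hfrob hstab2 (hSsub hπS) (hSsub hτS) (hSsub hσS)
        hπτ hπσ hτσ (hSint π hπS τ hτS) (hSint π hπS σ hσS) (hSint τ hτS σ hσS)
    obtain ⟨π, τ, hπτ, rfl⟩ := Finset.card_eq_two.1 (le_antisymm hle hge)
    have hπS : π ∈ ({π, τ} : Finset (Equiv.Perm (Fin n))) := by simp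
    have hτS : τ ∈ ({π, τ} : Finset (Equiv.Perm (Fin n))) := by simp
    have hπG : π ∈ G := hSsub hπS
    have hτG : τ ∈ G := hSsub hτS
    set a := π⁻¹ * τ with hadef
    have haG : a ∈ G := G.mul_mem (G.inv_mem hπG) hτG
    have ha1 : a ≠ 1 := fun h => hπτ (inv_mul_eq_one.1 h)
    obtain ⟨x₀, hx₀⟩ := hSint π hπS τ hτS
    have hax₀ : a x₀ = x₀ := by
      rw [hadef, Equiv.Perm.mul_apply, ← hx₀, Equiv.Perm.coe_inv, Equiv.symm_apply_apply]
    obtain ⟨hstabeq, _⟩ := stab_pair (hstab2 x₀) haG ha1 hax₀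
    refine ⟨π, hπG, x₀, ?_⟩
    have hset : {h : Equiv.Perm (Fin n) | h ∈ G ∧ h x₀ = x₀}
        = ({1, a} : Set (Equiv.Perm (Fin n))) := by
      rw [stabF_coe, hstabeq]; simp
    rw [hset]
    have hπa : π * a = τ := by rw [hadef]; group
    ext t
    simp only [Finset.coe_insert, Finset.coe_singleton, Set.mem_insert_iff,
      Set.mem_singleton_iff, Set.mem_image]
    constructor
    · rintro (rfl | rfl)
      · exact ⟨1, Or.inl rfl, mul_one _⟩
      · exact ⟨a, Or.inr rfl, hπa⟩
    · rintro ⟨h, (rfl | rfl), rfl⟩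
      · left; exact mul_one _
      · right; exact hπa
end

section
/- Let G₁ ≤ Sym(n₁), ..., G_k ≤ Sym(n_k) and let G = G₁ × ⋯ × G_k act on [n₁] × ⋯ × [n_k] componentwise. Then the maximum size of an intersecting subset of G equals the product over i of the maximum sizes of intersecting subsets of the G_i. -/
/-- For the external direct product G = G₁ × ⋯ × G_k acting componentwise on
[n₁] × ⋯ × [n_k], the maximum size of an intersecting subset of G is the product of the
maximum sizes of intersecting subsets of the factors. -/
theorem stmt_10 (k : ℕ) (n : Fin k → ℕ)
    (G : ∀ i, Subgroup (Equiv.Perm (Fin (n i)))) (M : Fin k → ℕ)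
    (hM : ∀ i, IsGreatest {m : ℕ | ∃ S : Finset (Equiv.Perm (Fin (n i))),
        ↑S ⊆ (G i : Set (Equiv.Perm (Fin (n i)))) ∧
        (∀ π ∈ S, ∀ τ ∈ S, ∃ x, π x = τ x) ∧ S.card = m} (M i)) :
    IsGreatest {m : ℕ | ∃ S : Finset (∀ i, Equiv.Perm (Fin (n i))),
        (∀ g ∈ S, ∀ i, g i ∈ G i) ∧
        (∀ π ∈ S, ∀ τ ∈ S, ∃ x : ∀ i, Fin (n i), ∀ i, π i (x i) = τ i (x i)) ∧
        S.card = m}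
      (∏ i, M i) := by
  constructor
  · choose S hS hint hcard using fun i => (hM i).1
    refine ⟨Fintype.piFinset S, ?_, ?_, ?_⟩
    · intro g hg i
      exact hS i (Finset.mem_coe.mpr ((Fintype.mem_piFinset.mp hg) i))
    · intro π hπ τ hτ
      have h := fun i => hint i (π i) (Fintype.mem_piFinset.mp hπ i)
        (τ i) (Fintype.mem_piFinset.mp hτ i)
      exact ⟨fun i => (h i).choose, fun i => (h i).choose_spec⟩
    · rw [Fintype.card_piFinset]
      exact Finset.prod_congr rfl fun i _ => hcard i
  · rintro m ⟨S, hG, hint, rfl⟩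
    have hsub : S ⊆ Fintype.piFinset (fun i => S.image (· i)) := by
      intro g hg
      exact Fintype.mem_piFinset.mpr fun i => Finset.mem_image_of_mem _ hg
    calc S.card ≤ (Fintype.piFinset (fun i => S.image (· i))).card :=
          Finset.card_le_card hsub
      _ = ∏ i, (S.image (· i)).card := Fintype.card_piFinset _
      _ ≤ ∏ i, M i := by
          refine Finset.prod_le_prod' fun i _ => (hM i).2 ?_
          refine ⟨S.image (· i), ?_, ?_, rfl⟩
          · intro σ hσ
            obtain ⟨g, hg, rfl⟩ := Finset.mem_image.mp (Finset.mem_coe.mp hσ)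
            exact hG g hg i
          · intro π' hπ' τ' hτ'
            obtain ⟨π, hπ, rfl⟩ := Finset.mem_image.mp hπ'
            obtain ⟨τ, hτ, rfl⟩ := Finset.mem_image.mp hτ'
            obtain ⟨x, hx⟩ := hint π hπ τ hτ
            exact ⟨x i, hx i⟩
end

section
/- Let G₁ ≤ Sym(n₁), ..., G_k ≤ Sym(n_k) and G = G₁ × ⋯ × G_k with the componentwise action on [n₁] × ⋯ × [n_k]. Then G has the EKR property if and only if every G_i has the EKR property. -/
/-- A permutation group G ≤ Sym(α) has the EKR property if every intersecting subset
of G has size at most the size of some (hence of the largest) point-stabilizer. -/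
def HasEKR {α : Type*} [DecidableEq α] (G : Subgroup (Equiv.Perm α)) : Prop :=
  ∀ S : Finset (Equiv.Perm α), ↑S ⊆ (G : Set (Equiv.Perm α)) →
    (∀ π ∈ S, ∀ τ ∈ S, ∃ x, π x = τ x) →
    ∃ x : α, S.card ≤ Nat.card {g : Equiv.Perm α // g ∈ G ∧ g x = x}

/-- The external direct product G₁ × ⋯ × G_k, acting componentwise on
[n₁] × ⋯ × [n_k], has the EKR property. -/
def ProdHasEKR (k : ℕ) (n : Fin k → ℕ)
    (G : ∀ i, Subgroup (Equiv.Perm (Fin (n i)))) : Prop :=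
  ∀ S : Finset (∀ i, Equiv.Perm (Fin (n i))), (∀ g ∈ S, ∀ i, g i ∈ G i) →
    (∀ π ∈ S, ∀ τ ∈ S, ∃ x : ∀ i, Fin (n i), ∀ i, π i (x i) = τ i (x i)) →
    ∃ x : ∀ i, Fin (n i),
      S.card ≤ Nat.card {g : ∀ i, Equiv.Perm (Fin (n i)) //
        (∀ i, g i ∈ G i) ∧ ∀ i, g i (x i) = x i}

lemma prodStabCard (k : ℕ) (n : Fin k → ℕ)
    (G : ∀ i, Subgroup (Equiv.Perm (Fin (n i)))) (x : ∀ i, Fin (n i)) :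
    Nat.card {g : ∀ i, Equiv.Perm (Fin (n i)) //
        (∀ i, g i ∈ G i) ∧ ∀ i, g i (x i) = x i}
      = ∏ i, Nat.card {h : Equiv.Perm (Fin (n i)) // h ∈ G i ∧ h (x i) = x i} := by
  rw [← Nat.card_pi]
  exact Nat.card_congr
    ⟨fun g i => ⟨g.1 i, g.2.1 i, g.2.2 i⟩,
     fun h => ⟨fun i => (h i).1, fun i => (h i).2.1, fun i => (h i).2.2⟩,
     fun _ => rfl, fun _ => rfl⟩

lemma stabCardPos {α : Type*} [Fintype α] [DecidableEq α] (G : Subgroup (Equiv.Perm α))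
    (x : α) : 0 < Nat.card {g : Equiv.Perm α // g ∈ G ∧ g x = x} := by
  have : Nonempty {g : Equiv.Perm α // g ∈ G ∧ g x = x} := ⟨⟨1, G.one_mem, rfl⟩⟩
  exact Nat.card_pos

/-- The external direct product has the EKR property iff every factor does. -/
theorem stmt_11 (k : ℕ) (n : Fin k → ℕ) (hn : ∀ i, 0 < n i)
    (G : ∀ i, Subgroup (Equiv.Perm (Fin (n i)))) :
    ProdHasEKR k n G ↔ ∀ i, HasEKR (G i) := by
  classical
  constructor
  · -- product EKR → each factor EKR
    intro hprod j S hSG hSint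
    -- choose, for each coordinate, a point with stabilizer of maximal size
    have hy : ∀ i, ∃ y : Fin (n i), ∀ z : Fin (n i),
        Nat.card {g : Equiv.Perm (Fin (n i)) // g ∈ G i ∧ g z = z}
          ≤ Nat.card {g : Equiv.Perm (Fin (n i)) // g ∈ G i ∧ g y = y} := by
      intro i
      haveI : Nonempty (Fin (n i)) := ⟨⟨0, hn i⟩⟩
      obtain ⟨y, -, hy⟩ := Finset.exists_max_image Finset.univ
        (fun z : Fin (n i) => Nat.card {g : Equiv.Perm (Fin (n i)) // g ∈ G i ∧ g z = z})
        ⟨Classical.arbitrary _, Finset.mem_univ _⟩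
      exact ⟨y, fun z => hy z (Finset.mem_univ z)⟩
    choose y hy using hy
    -- the big intersecting family
    set F : ∀ i, Finset (Equiv.Perm (Fin (n i))) := fun i =>
      Finset.univ.filter (fun g =>
        (i ≠ j → (g ∈ G i ∧ g (y i) = y i)) ∧ ∀ h : i = j, (h ▸ g) ∈ S) with hF
    have hFj : F j = S := by
      ext g
      simp [hF]
    have hFi : ∀ i, i ≠ j → F i =
        Finset.univ.filter (fun g : Equiv.Perm (Fin (n i)) => g ∈ G i ∧ g (y i) = y i) := by
      intro i hij
      ext g
      simp [hF, hij]
    have hcardFi : ∀ i, i ≠ j → (F i).card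
        = Nat.card {g : Equiv.Perm (Fin (n i)) // g ∈ G i ∧ g (y i) = y i} := by
      intro i hij
      rw [hFi i hij, Nat.card_eq_fintype_card, Fintype.card_subtype]
    set T : Finset (∀ i, Equiv.Perm (Fin (n i))) := Fintype.piFinset F with hT
    have hmemT : ∀ g, g ∈ T ↔ ∀ i, g i ∈ F i := by
      intro g; simp [hT, Fintype.mem_piFinset]
    obtain ⟨x, hx⟩ := hprod T
      (by
        intro g hg i
        have hgi := (hmemT g).1 hg i
        by_cases hij : i = j
        · subst hij
          rw [hFj] at hgi
          exact hSG hgi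
        · rw [hFi i hij] at hgi
          simp only [Finset.mem_filter] at hgi
          exact hgi.2.1)
      (by
        intro π hπ τ hτ
        have hπj := (hmemT π).1 hπ j
        have hτj := (hmemT τ).1 hτ j
        rw [hFj] at hπj hτj
        obtain ⟨xj, hxj⟩ := hSint (π j) hπj (τ j) hτj
        refine ⟨fun i => if h : i = j then h.symm ▸ xj else y i, fun i => ?_⟩
        by_cases h : i = j
        · subst h
          simpa using hxj
        · simp only [dif_neg h]
          have hπi := (hmemT π).1 hπ i
          have hτi := (hmemT τ).1 hτ i
          rw [hFi i h] at hπi hτi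
          simp only [Finset.mem_filter] at hπi hτi
          rw [hπi.2.2, hτi.2.2])
    rw [prodStabCard] at hx
    have hTcard : T.card = ∏ i, (F i).card := Fintype.card_piFinset F
    -- split off the j-th coordinate from both products
    rw [hTcard, Fintype.prod_eq_mul_prod_compl j] at hx
    rw [Fintype.prod_eq_mul_prod_compl j
      (fun i => Nat.card {h : Equiv.Perm (Fin (n i)) // h ∈ G i ∧ h (x i) = x i})] at hx
    have hyx : ∏ i ∈ {j}ᶜ, Nat.card {h : Equiv.Perm (Fin (n i)) // h ∈ G i ∧ h (x i) = x i}
        ≤ ∏ i ∈ {j}ᶜ, Nat.card {h : Equiv.Perm (Fin (n i)) // h ∈ G i ∧ h (y i) = y i} :=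
      Finset.prod_le_prod' (fun i _ => hy i (x i))
    have hFcompl : ∏ i ∈ {j}ᶜ, (F i).card
        = ∏ i ∈ {j}ᶜ, Nat.card {h : Equiv.Perm (Fin (n i)) // h ∈ G i ∧ h (y i) = y i} := by
      refine Finset.prod_congr rfl (fun i hi => ?_)
      exact hcardFi i (by simpa using hi)
    rw [hFj, hFcompl] at hx
    have hkey : S.card * (∏ i ∈ {j}ᶜ,
          Nat.card {h : Equiv.Perm (Fin (n i)) // h ∈ G i ∧ h (y i) = y i})
        ≤ Nat.card {h : Equiv.Perm (Fin (n j)) // h ∈ G j ∧ h (x j) = x j}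
          * (∏ i ∈ {j}ᶜ,
          Nat.card {h : Equiv.Perm (Fin (n i)) // h ∈ G i ∧ h (y i) = y i}) :=
      hx.trans (Nat.mul_le_mul_left _ hyx)
    have hpos : 0 < ∏ i ∈ {j}ᶜ,
        Nat.card {h : Equiv.Perm (Fin (n i)) // h ∈ G i ∧ h (y i) = y i} :=
      Finset.prod_pos (fun i _ => stabCardPos (G i) (y i))
    exact ⟨x j, Nat.le_of_mul_le_mul_right hkey hpos⟩
  · -- each factor EKR → product EKR
    intro h S hSG hSint
    have hx : ∀ i, ∃ x : Fin (n i), (S.image (fun g => g i)).card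
        ≤ Nat.card {g : Equiv.Perm (Fin (n i)) // g ∈ G i ∧ g x = x} := by
      intro i
      apply h i
      · intro g hg
        simp only [Finset.coe_image, Set.mem_image, Finset.mem_coe] at hg
        obtain ⟨f, hf, rfl⟩ := hg
        exact hSG f hf i
      · intro π hπ τ hτ
        simp only [Finset.mem_image] at hπ hτ
        obtain ⟨p, hp, rfl⟩ := hπ
        obtain ⟨q, hq, rfl⟩ := hτ
        obtain ⟨x, hx⟩ := hSint p hp q hq
        exact ⟨x i, hx i⟩
    choose x hx using hx
    refine ⟨x, ?_⟩
    rw [prodStabCard]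
    calc S.card ≤ (Fintype.piFinset (fun i => S.image (fun g => g i))).card := by
          apply Finset.card_le_card
          intro g hg
          simp only [Fintype.mem_piFinset, Finset.mem_image]
          exact fun i => ⟨g, hg, rfl⟩
      _ = ∏ i, (S.image (fun g => g i)).card := Fintype.card_piFinset _
      _ ≤ ∏ i, Nat.card {h : Equiv.Perm (Fin (n i)) // h ∈ G i ∧ h (x i) = x i} :=
          Finset.prod_le_prod' (fun i _ => hx i)
end

section
/- Let G₁ ≤ Sym(n₁), ..., G_k ≤ Sym(n_k) and G = G₁ × ⋯ × G_k with the componentwise action. Then G has the strict EKR property if and only if every G_i has the strict EKR property. -/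
open Finset Fintype

/-- A permutation group G ≤ Sym(α) has the strict EKR property if every intersecting
subset of maximum size is a (left) coset of a point-stabilizer. -/
def HasStrictEKR {α : Type*} [DecidableEq α] (G : Subgroup (Equiv.Perm α)) : Prop :=
  ∀ S : Finset (Equiv.Perm α), ↑S ⊆ (G : Set (Equiv.Perm α)) →
    (∀ π ∈ S, ∀ τ ∈ S, ∃ x, π x = τ x) →
    (∀ T : Finset (Equiv.Perm α), ↑T ⊆ (G : Set (Equiv.Perm α)) →
      (∀ π ∈ T, ∀ τ ∈ T, ∃ x, π x = τ x) → T.card ≤ S.card) →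
    ∃ g ∈ G, ∃ x : α,
      (↑S : Set (Equiv.Perm α)) =
        (fun h => g * h) '' {h : Equiv.Perm α | h ∈ G ∧ h x = x}

/-- The external direct product G₁ × ⋯ × G_k, acting componentwise on
[n₁] × ⋯ × [n_k], has the strict EKR property. -/
def ProdHasStrictEKR (k : ℕ) (n : Fin k → ℕ)
    (G : ∀ i, Subgroup (Equiv.Perm (Fin (n i)))) : Prop :=
  ∀ S : Finset (∀ i, Equiv.Perm (Fin (n i))), (∀ g ∈ S, ∀ i, g i ∈ G i) →
    (∀ π ∈ S, ∀ τ ∈ S, ∃ x : ∀ i, Fin (n i), ∀ i, π i (x i) = τ i (x i)) →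
    (∀ T : Finset (∀ i, Equiv.Perm (Fin (n i))), (∀ g ∈ T, ∀ i, g i ∈ G i) →
      (∀ π ∈ T, ∀ τ ∈ T, ∃ x : ∀ i, Fin (n i), ∀ i, π i (x i) = τ i (x i)) →
      T.card ≤ S.card) →
    ∃ g : ∀ i, Equiv.Perm (Fin (n i)), (∀ i, g i ∈ G i) ∧ ∃ x : ∀ i, Fin (n i),
      (↑S : Set (∀ i, Equiv.Perm (Fin (n i)))) =
        (fun h => g * h) ''
          {h : ∀ i, Equiv.Perm (Fin (n i)) | (∀ i, h i ∈ G i) ∧ ∀ i, h i (x i) = x i}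

section aux
variable {k : ℕ} {n : Fin k → ℕ}

private lemma projInter (T : Finset (∀ i, Equiv.Perm (Fin (n i))))
    (hT : ∀ π ∈ T, ∀ τ ∈ T, ∃ x : ∀ i, Fin (n i), ∀ i, π i (x i) = τ i (x i)) (i : Fin k) :
    ∀ a ∈ T.image (fun g => g i), ∀ b ∈ T.image (fun g => g i), ∃ x, a x = b x := by
  intro a ha b hb
  obtain ⟨π, hπ, rfl⟩ := Finset.mem_image.1 ha
  obtain ⟨τ, hτ, rfl⟩ := Finset.mem_image.1 hb
  obtain ⟨x, hx⟩ := hT π hπ τ hτ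
  exact ⟨x i, hx i⟩

private lemma cardLe (T : Finset (∀ i, Equiv.Perm (Fin (n i)))) :
    T.card ≤ ∏ i, (T.image (fun g => g i)).card := by
  rw [← Fintype.card_piFinset]
  exact Finset.card_le_card fun g hg =>
    Fintype.mem_piFinset.2 fun i => Finset.mem_image_of_mem _ hg

private lemma piInter (P : ∀ i, Finset (Equiv.Perm (Fin (n i))))
    (hP : ∀ i, ∀ a ∈ P i, ∀ b ∈ P i, ∃ x, a x = b x) :
    ∀ π ∈ Fintype.piFinset P, ∀ τ ∈ Fintype.piFinset P,
      ∃ x : ∀ i, Fin (n i), ∀ i, π i (x i) = τ i (x i) := by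
  intro π hπ τ hτ
  have h : ∀ i, ∃ x, π i x = τ i x := fun i =>
    hP i _ (Fintype.mem_piFinset.1 hπ i) _ (Fintype.mem_piFinset.1 hτ i)
  choose x hx using h
  exact ⟨x, hx⟩

private lemma existsMax {m : ℕ} (H : Subgroup (Equiv.Perm (Fin m))) (hm : 0 < m) :
    ∃ Q : Finset (Equiv.Perm (Fin m)), (↑Q : Set (Equiv.Perm (Fin m))) ⊆ (H : Set _) ∧
      (∀ a ∈ Q, ∀ b ∈ Q, ∃ x, a x = b x) ∧ Q.Nonempty ∧
      (∀ T : Finset (Equiv.Perm (Fin m)), (↑T : Set (Equiv.Perm (Fin m))) ⊆ (H : Set _) →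
        (∀ a ∈ T, ∀ b ∈ T, ∃ x, a x = b x) → T.card ≤ Q.card) := by
  classical
  set pred : Finset (Equiv.Perm (Fin m)) → Prop :=
    fun T => (↑T : Set (Equiv.Perm (Fin m))) ⊆ (H : Set _) ∧ ∀ a ∈ T, ∀ b ∈ T, ∃ x, a x = b x
    with hpred
  have h1 : ({1} : Finset (Equiv.Perm (Fin m))) ∈ Finset.univ.filter pred := by
    simp only [Finset.mem_filter, Finset.mem_univ, true_and, hpred]
    constructor
    · intro a ha
      simp only [Finset.coe_singleton, Set.mem_singleton_iff] at ha
      subst ha; exact H.one_mem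
    · intro a ha b hb
      simp only [Finset.mem_singleton] at ha hb
      subst ha; subst hb; exact ⟨⟨0, hm⟩, rfl⟩
  obtain ⟨Q, hQ, hmax⟩ := Finset.exists_max_image _ Finset.card ⟨_, h1⟩
  rw [Finset.mem_filter] at hQ
  refine ⟨Q, hQ.2.1, hQ.2.2, ?_, fun T hT1 hT2 =>
    hmax T (Finset.mem_filter.2 ⟨Finset.mem_univ _, hT1, hT2⟩)⟩
  have h2 := hmax _ h1
  simp only [Finset.card_singleton] at h2
  exact Finset.card_pos.1 (lt_of_lt_of_le Nat.zero_lt_one h2)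

end aux

/-- The external direct product has the strict EKR property iff every factor does. -/
theorem stmt_12 (k : ℕ) (n : Fin k → ℕ) (hn : ∀ i, 0 < n i)
    (G : ∀ i, Subgroup (Equiv.Perm (Fin (n i)))) :
    ProdHasStrictEKR k n G ↔ ∀ i, HasStrictEKR (G i) := by
  classical
  constructor
  · -- product EKR ⟹ each factor EKR
    intro hprod i Si hSiG hSiInt hSimax
    -- choose a maximum intersecting set Q j in each G j
    choose Q hQG hQint hQne hQmax using fun j => existsMax (G j) (hn j)
    -- Si is nonempty
    have hSine : Si.Nonempty := by
      have h1 : ({1} : Finset (Equiv.Perm (Fin (n i)))).card ≤ Si.card := by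
        apply hSimax
        · intro a ha
          simp only [Finset.coe_singleton, Set.mem_singleton_iff] at ha
          subst ha; exact (G i).one_mem
        · intro a ha b hb
          simp only [Finset.mem_singleton] at ha hb
          subst ha; subst hb; exact ⟨⟨0, hn i⟩, rfl⟩
      exact Finset.card_pos.1 (lt_of_lt_of_le (by simp) h1)
    have hcardQi : Si.card = (Q i).card :=
      le_antisymm (hQmax i Si hSiG hSiInt) (hSimax (Q i) (hQG i) (hQint i))
    set P : ∀ j, Finset (Equiv.Perm (Fin (n j))) := Function.update Q i Si with hPdef
    have hPG : ∀ j, (↑(P j) : Set (Equiv.Perm (Fin (n j)))) ⊆ (G j : Set _) := by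
      intro j
      by_cases hj : j = i
      · subst hj; rw [hPdef, Function.update_self]; exact hSiG
      · rw [hPdef, Function.update_of_ne hj]; exact hQG j
    have hPint : ∀ j, ∀ a ∈ P j, ∀ b ∈ P j, ∃ x, a x = b x := by
      intro j
      by_cases hj : j = i
      · subst hj; rw [hPdef, Function.update_self]; exact hSiInt
      · rw [hPdef, Function.update_of_ne hj]; exact hQint j
    have hPne : ∀ j, (P j).Nonempty := by
      intro j
      by_cases hj : j = i
      · subst hj; rw [hPdef, Function.update_self]; exact hSine
      · rw [hPdef, Function.update_of_ne hj]; exact hQne j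
    set S : Finset (∀ j, Equiv.Perm (Fin (n j))) := Fintype.piFinset P with hSdef
    have hcardP : ∏ j, (P j).card = ∏ j, (Q j).card := by
      have e0 : (fun l => (P l).card) = Function.update (fun l => (Q l).card) i Si.card :=
        funext fun l => Function.apply_update (fun _ s => Finset.card s) Q i Si l
      rw [e0, Finset.prod_update_of_mem (Finset.mem_univ i), hcardQi, ← Finset.erase_eq,
        Finset.mul_prod_erase Finset.univ (fun l => (Q l).card) (Finset.mem_univ i)]
    -- S is a maximum intersecting set in the product
    obtain ⟨g, hgG, x, hgx⟩ := hprod S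
      (fun h hh j => hPG j (Fintype.mem_piFinset.1 hh j))
      (piInter P hPint)
      (by
        intro T hTG hTint
        calc T.card ≤ ∏ j, (T.image (fun g => g j)).card := cardLe T
          _ ≤ ∏ j, (Q j).card := Finset.prod_le_prod' fun j _ =>
              hQmax j _ (fun a ha => by
                rw [Finset.mem_coe] at ha
                obtain ⟨π, hπ, rfl⟩ := Finset.mem_image.1 ha
                exact hTG π hπ j) (projInter T hTint j)
          _ = ∏ j, (P j).card := hcardP.symm
          _ = S.card := (Fintype.card_piFinset P).symm)
    -- extract the i-th component
    choose q hq using hQne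
    refine ⟨g i, hgG i, x i, ?_⟩
    ext a
    simp only [Set.mem_image, Set.mem_setOf_eq]
    constructor
    · intro ha
      rw [Finset.mem_coe] at ha
      -- build an element of S whose i-th coordinate is a
      set h : ∀ j, Equiv.Perm (Fin (n j)) := Function.update q i a with hhdef
      have hhS : h ∈ S := by
        refine Fintype.mem_piFinset.2 fun j => ?_
        by_cases hj : j = i
        · subst hj
          rw [hhdef, Function.update_self, hPdef, Function.update_self]
          exact ha
        · rw [hhdef, Function.update_of_ne hj, hPdef, Function.update_of_ne hj]
          exact hq j
      have hmem : h ∈ (fun h' => g * h') ''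
          {h' : ∀ j, Equiv.Perm (Fin (n j)) | (∀ j, h' j ∈ G j) ∧ ∀ j, h' j (x j) = x j} := by
        rw [← hgx]; exact Finset.mem_coe.2 hhS
      obtain ⟨b, ⟨hbG, hbx⟩, hbe⟩ := hmem
      refine ⟨b i, ⟨hbG i, hbx i⟩, ?_⟩
      have : g i * b i = h i := congrFun hbe i
      rw [this, hhdef, Function.update_self]
    · rintro ⟨b, ⟨hbG, hbx⟩, rfl⟩
      -- build an element of the coset whose i-th coordinate is g i * b
      set h : ∀ j, Equiv.Perm (Fin (n j)) :=
        Function.update (fun j => (1 : Equiv.Perm (Fin (n j)))) i b with hhdef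
      have hh : (∀ j, h j ∈ G j) ∧ ∀ j, h j (x j) = x j := by
        constructor
        · intro j
          by_cases hj : j = i
          · subst hj; rw [hhdef, Function.update_self]; exact hbG
          · rw [hhdef, Function.update_of_ne hj]; exact (G j).one_mem
        · intro j
          by_cases hj : j = i
          · subst hj; rw [hhdef, Function.update_self]; exact hbx
          · rw [hhdef, Function.update_of_ne hj]; rfl
      have hgh : g * h ∈ (↑S : Set (∀ j, Equiv.Perm (Fin (n j)))) := by
        rw [hgx]; exact ⟨h, hh, rfl⟩
      have hmem := Fintype.mem_piFinset.1 (Finset.mem_coe.1 hgh) i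
      rw [hPdef, Function.update_self] at hmem
      have : (g * h) i = g i * b := by
        show g i * h i = g i * b
        rw [hhdef, Function.update_self]
      rwa [this] at hmem
  · -- factor EKR ⟹ product EKR
    intro hfac S hSG hSInt hSmax
    set P : ∀ i, Finset (Equiv.Perm (Fin (n i))) := fun i => S.image (fun g => g i) with hP
    -- S is nonempty
    have hone : ({1} : Finset (∀ i, Equiv.Perm (Fin (n i)))).card ≤ S.card := by
      apply hSmax
      · intro g hg j
        simp only [Finset.mem_singleton] at hg
        subst hg; exact (G j).one_mem
      · intro π hπ τ hτ
        simp only [Finset.mem_singleton] at hπ hτ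
        subst hπ; subst hτ
        exact ⟨fun j => ⟨0, hn j⟩, fun j => rfl⟩
    have hSne : S.Nonempty := Finset.card_pos.1
      (lt_of_lt_of_le (by simp) hone)
    have hPne : ∀ j, (P j).Nonempty := fun j => hSne.image _
    have hPsub : ∀ j, (↑(P j) : Set (Equiv.Perm (Fin (n j)))) ⊆ (G j : Set _) := by
      intro j a ha
      rw [Finset.mem_coe, hP] at ha
      obtain ⟨g, hg, rfl⟩ := Finset.mem_image.1 ha
      exact hSG g hg j
    have hPint : ∀ j, ∀ a ∈ P j, ∀ b ∈ P j, ∃ x, a x = b x := fun j => projInter S hSInt j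
    have hS_le : S.card ≤ ∏ j, (P j).card := cardLe S
    -- each P i is a maximum intersecting set in G i
    have hPmax : ∀ j, ∀ T : Finset (Equiv.Perm (Fin (n j))),
        (↑T : Set (Equiv.Perm (Fin (n j)))) ⊆ (G j : Set _) →
        (∀ a ∈ T, ∀ b ∈ T, ∃ x, a x = b x) → T.card ≤ (P j).card := by
      intro j T hTG hTint
      have key : (Fintype.piFinset (Function.update P j T)).card ≤ S.card := by
        apply hSmax
        · intro g hg l
          have hgl := Fintype.mem_piFinset.1 hg l
          by_cases hl : l = j
          · subst hl; rw [Function.update_self] at hgl; exact hTG hgl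
          · rw [Function.update_of_ne hl] at hgl; exact hPsub l hgl
        · apply piInter
          intro l
          by_cases hl : l = j
          · subst hl; rw [Function.update_self]; exact hTint
          · rw [Function.update_of_ne hl]; exact hPint l
      rw [Fintype.card_piFinset] at key
      have e0 : (fun l => (Function.update P j T l).card)
          = Function.update (fun l => (P l).card) j T.card :=
        funext fun l => Function.apply_update (fun _ s => Finset.card s) P j T l
      rw [e0, Finset.prod_update_of_mem (Finset.mem_univ j), ← Finset.erase_eq] at key
      have e1 : (P j).card * ∏ l ∈ Finset.univ.erase j, (P l).card = ∏ l, (P l).card :=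
        Finset.mul_prod_erase Finset.univ (fun l => (P l).card) (Finset.mem_univ j)
      have hEpos : 0 < ∏ l ∈ Finset.univ.erase j, (P l).card :=
        Finset.prod_pos fun l _ => Finset.card_pos.2 (hPne l)
      have : T.card * ∏ l ∈ Finset.univ.erase j, (P l).card
          ≤ (P j).card * ∏ l ∈ Finset.univ.erase j, (P l).card :=
        le_trans key (le_trans hS_le (le_of_eq e1.symm))
      exact Nat.le_of_mul_le_mul_right this hEpos
    -- S equals the full product of its projections
    have hS_eq : S = Fintype.piFinset P := by
      apply Finset.eq_of_subset_of_card_le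
      · intro g hg
        exact Fintype.mem_piFinset.2 fun j => Finset.mem_image_of_mem _ hg
      · apply hSmax
        · intro g hg j
          exact hPsub j (Fintype.mem_piFinset.1 hg j)
        · exact piInter P hPint
    -- apply factor EKR to each P i
    have hfac' := fun j => hfac j (P j) (hPsub j) (hPint j) (hPmax j)
    choose g hgG x hx using hfac'
    refine ⟨g, hgG, x, ?_⟩
    ext h
    simp only [Set.mem_image, Set.mem_setOf_eq]
    constructor
    · intro hh
      rw [Finset.mem_coe, hS_eq] at hh
      have hh' : ∀ j, ∃ b, (b ∈ G j ∧ b (x j) = x j) ∧ g j * b = h j := by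
        intro j
        have : h j ∈ ((fun b => g j * b) '' {b | b ∈ G j ∧ b (x j) = x j}) := by
          rw [← hx j]
          exact Finset.mem_coe.2 (Fintype.mem_piFinset.1 hh j)
        exact this
      choose b hb hbe using hh'
      exact ⟨b, ⟨fun j => (hb j).1, fun j => (hb j).2⟩, funext hbe⟩
    · rintro ⟨b, ⟨hbG, hbx⟩, rfl⟩
      rw [Finset.mem_coe, hS_eq]
      refine Fintype.mem_piFinset.2 fun j => ?_
      have : g j * b j ∈ ((fun c => g j * c) '' {c | c ∈ G j ∧ c (x j) = x j}) :=
        ⟨b j, ⟨hbG j, hbx j⟩, rfl⟩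
      rw [← hx j] at this
      exact this
end

section
/- If X and Y are graphs then the independence number of the lexicographic product X[Y] equals α(X)·α(Y). -/
/-- The lexicographic product X[Y] of two simple graphs. -/
def lexProd {α β : Type*} (X : SimpleGraph α) (Y : SimpleGraph β) :
    SimpleGraph (α × β) where
  Adj p q := X.Adj p.1 q.1 ∨ (p.1 = q.1 ∧ Y.Adj p.2 q.2)
  symm := by
    constructor
    rintro p q (h | ⟨h, h'⟩)
    · exact Or.inl h.symm
    · exact Or.inr ⟨h.symm, h'.symm⟩
  loopless := by
    constructor
    rintro p (h | ⟨-, h⟩)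
    · exact X.irrefl h
    · exact Y.irrefl h

/-- An independent set in a simple graph. -/
def IsIndepSet {V : Type*} (X : SimpleGraph V) (s : Set V) : Prop :=
  ∀ u ∈ s, ∀ v ∈ s, ¬ X.Adj u v

/-- The independence number of the lexicographic product X[Y] of finite graphs
equals α(X)·α(Y). -/
theorem stmt_13 {α β : Type*} [Fintype α] [Fintype β] [DecidableEq α] [DecidableEq β]
    (X : SimpleGraph α) (Y : SimpleGraph β) (a b : ℕ)
    (ha : IsGreatest {m : ℕ | ∃ S : Finset α, IsIndepSet X ↑S ∧ S.card = m} a)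
    (hb : IsGreatest {m : ℕ | ∃ S : Finset β, IsIndepSet Y ↑S ∧ S.card = m} b) :
    IsGreatest {m : ℕ | ∃ S : Finset (α × β), IsIndepSet (lexProd X Y) ↑S ∧ S.card = m}
      (a * b) := by
  constructor
  · obtain ⟨A, hA, hAcard⟩ := ha.1
    obtain ⟨B, hB, hBcard⟩ := hb.1
    refine ⟨A ×ˢ B, ?_, by simp [hAcard, hBcard]⟩
    rintro ⟨x1, y1⟩ hp ⟨x2, y2⟩ hq (h | ⟨he, h⟩)
    · simp only [Finset.coe_product, Set.mem_prod] at hp hq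
      exact hA x1 hp.1 x2 hq.1 h
    · simp only [Finset.coe_product, Set.mem_prod] at hp hq
      exact hB y1 hp.2 y2 hq.2 h
  · rintro m ⟨T, hT, rfl⟩
    classical
    have hfib : ∀ x ∈ T.image Prod.fst,
        (T.filter (fun p => p.1 = x)).card ≤ b := by
      intro x hx
      set F := T.filter (fun p => p.1 = x) with hF
      have hinj : Set.InjOn Prod.snd (↑F : Set (α × β)) := by
        rintro ⟨x1, y1⟩ h1 ⟨x2, y2⟩ h2 h
        simp only [hF, Finset.coe_filter, Set.mem_setOf_eq] at h1 h2
        simp only at h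
        simp [h1.2, h2.2, h]
      have hcard : F.card = (F.image Prod.snd).card :=
        (Finset.card_image_of_injOn hinj).symm
      rw [hcard]
      apply hb.2
      refine ⟨F.image Prod.snd, ?_, rfl⟩
      intro u hu v hv huv
      simp only [Finset.coe_image, Set.mem_image, Finset.mem_coe] at hu hv
      obtain ⟨⟨x1, y1⟩, h1, rfl⟩ := hu
      obtain ⟨⟨x2, y2⟩, h2, rfl⟩ := hv
      simp only [hF, Finset.mem_filter] at h1 h2
      exact hT _ h1.1 _ h2.1 (Or.inr ⟨h1.2.trans h2.2.symm, huv⟩)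
    have hA : (T.image Prod.fst).card ≤ a := by
      apply ha.2
      refine ⟨T.image Prod.fst, ?_, rfl⟩
      intro u hu v hv huv
      simp only [Finset.coe_image, Set.mem_image, Finset.mem_coe] at hu hv
      obtain ⟨p, hp, rfl⟩ := hu
      obtain ⟨q, hq, rfl⟩ := hv
      exact hT _ hp _ hq (Or.inl huv)
    calc T.card
        = ∑ x ∈ T.image Prod.fst, (T.filter (fun p => p.1 = x)).card :=
          Finset.card_eq_sum_card_fiberwise (fun p hp => Finset.mem_image_of_mem _ hp)
      _ ≤ ∑ _x ∈ T.image Prod.fst, b := Finset.sum_le_sum hfib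
      _ = (T.image Prod.fst).card * b := by rw [Finset.sum_const, smul_eq_mul]
      _ ≤ a * b := Nat.mul_le_mul_right b hA
end

section
/- Let G ≤ Sym(m) and H ≤ Sym(n) both have the EKR property. Then the wreath product G ≀ H, acting on {1,...,m} × {1,...,n} by (x,j)^{(g₁,...,g_n,h)} = (g_j(x), h(j)), has the EKR property. -/
/-- The wreath product G ≀ H (G ≤ Sym(m), H ≤ Sym(n)), whose elements are tuples
(g₁,…,gₙ,h), acts on {1,…,m} × {1,…,n} by (x,j) ↦ (g_j(x), h(j)).  If G and H have
the EKR property then so does G ≀ H: every intersecting subset has size at most the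
size of a point-stabilizer. -/
theorem stmt_17 (m n : ℕ) (hm : 0 < m) (hn : 0 < n)
    (G : Subgroup (Equiv.Perm (Fin m))) (H : Subgroup (Equiv.Perm (Fin n)))
    (hG : ∀ S : Finset (Equiv.Perm (Fin m)), ↑S ⊆ (G : Set (Equiv.Perm (Fin m))) →
      (∀ π ∈ S, ∀ τ ∈ S, ∃ x, π x = τ x) →
      ∃ x : Fin m, S.card ≤ Nat.card {g : Equiv.Perm (Fin m) // g ∈ G ∧ g x = x})
    (hH : ∀ S : Finset (Equiv.Perm (Fin n)), ↑S ⊆ (H : Set (Equiv.Perm (Fin n))) →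
      (∀ π ∈ S, ∀ τ ∈ S, ∃ x, π x = τ x) →
      ∃ j : Fin n, S.card ≤ Nat.card {h : Equiv.Perm (Fin n) // h ∈ H ∧ h j = j}) :
    ∀ S : Finset ((Fin n → Equiv.Perm (Fin m)) × Equiv.Perm (Fin n)),
      (∀ w ∈ S, (∀ i, w.1 i ∈ G) ∧ w.2 ∈ H) →
      (∀ w ∈ S, ∀ w' ∈ S, ∃ p : Fin m × Fin n,
        (w.1 p.2 p.1, w.2 p.2) = (w'.1 p.2 p.1, w'.2 p.2)) →
      ∃ x : Fin m, ∃ j : Fin n,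
        S.card ≤ Nat.card {w : (Fin n → Equiv.Perm (Fin m)) × Equiv.Perm (Fin n) //
          (∀ i, w.1 i ∈ G) ∧ w.2 ∈ H ∧ w.1 j x = x ∧ w.2 j = j} := by
  classical
  intro S hmem hint
  haveI : Nonempty (Fin m) := ⟨⟨0, hm⟩⟩
  haveI : Nonempty (Fin n) := ⟨⟨0, hn⟩⟩
  -- a base index of `Fin n`
  set z : Fin n := ⟨0, hn⟩ with hz
  -- choose a point `x₀` with maximal stabilizer cardinality in `G`
  obtain ⟨x₀, hx₀⟩ :=
    Finite.exists_max (fun x : Fin m => Nat.card {g : Equiv.Perm (Fin m) // g ∈ G ∧ g x = x})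
  set A : ℕ := Nat.card {g : Equiv.Perm (Fin m) // g ∈ G ∧ g x₀ = x₀} with hA
  -- the projection of `S` to the top group is intersecting in `H`
  set T : Finset (Equiv.Perm (Fin n)) := S.image Prod.snd with hT
  have hTsub : ↑T ⊆ (H : Set (Equiv.Perm (Fin n))) := by
    intro h hh
    rcases Finset.mem_image.mp hh with ⟨w, hw, rfl⟩
    exact (hmem w hw).2
  have hTint : ∀ π ∈ T, ∀ τ ∈ T, ∃ x, π x = τ x := by
    intro π hπ τ hτ
    rcases Finset.mem_image.mp hπ with ⟨w, hw, rfl⟩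
    rcases Finset.mem_image.mp hτ with ⟨w', hw', rfl⟩
    rcases hint w hw w' hw' with ⟨p, hp⟩
    exact ⟨p.2, congrArg Prod.snd hp⟩
  obtain ⟨j₀, hj₀⟩ := hH T hTsub hTint
  set B : ℕ := Nat.card {h : Equiv.Perm (Fin n) // h ∈ H ∧ h j₀ = j₀} with hB
  refine ⟨x₀, j₀, ?_⟩
  -- the "line" map: normalize the tuple by the inverse of its `z`-entry
  set Φ : (Fin n → Equiv.Perm (Fin m)) × Equiv.Perm (Fin n) →
      (Fin n → Equiv.Perm (Fin m)) × Equiv.Perm (Fin n) :=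
    fun w => (fun j => w.1 j * (w.1 z)⁻¹, w.2) with hΦ
  -- each fiber of Φ in S has size at most A
  have fiber_le : ∀ y ∈ S.image Φ, (S.filter fun w => Φ w = y).card ≤ A := by
    intro y _
    set F := S.filter fun w => Φ w = y with hF
    have hFsub : ∀ w ∈ F, w ∈ S ∧ Φ w = y := by
      intro w hw
      exact ⟨(Finset.mem_filter.mp hw).1, (Finset.mem_filter.mp hw).2⟩
    have key : ∀ w ∈ F, ∀ j, w.1 j = y.1 j * w.1 z := by
      intro w hw j
      have h1 : w.1 j * (w.1 z)⁻¹ = y.1 j := by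
        have := congrArg Prod.fst (hFsub w hw).2
        exact congrFun this j
      exact mul_inv_eq_iff_eq_mul.mp h1
    -- project the fiber to `G`
    set S' : Finset (Equiv.Perm (Fin m)) := F.image (fun w => w.1 z) with hS'
    have hinj : Set.InjOn (fun w : (Fin n → Equiv.Perm (Fin m)) × Equiv.Perm (Fin n) => w.1 z)
        ↑F := by
      intro w hw w' hw' hww
      have h2 : w.2 = w'.2 := by
        have e1 := congrArg Prod.snd (hFsub w hw).2
        have e2 := congrArg Prod.snd (hFsub w' hw').2
        exact e1.trans e2.symm
      have h1 : w.1 = w'.1 := by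
        funext j
        rw [key w hw j, key w' hw' j]
        exact congrArg (fun t => y.1 j * t) hww
      exact Prod.ext h1 h2
    have hcard : S'.card = F.card := Finset.card_image_of_injOn hinj
    have hsub' : ↑S' ⊆ (G : Set (Equiv.Perm (Fin m))) := by
      intro g hg
      rcases Finset.mem_image.mp hg with ⟨w, hw, rfl⟩
      exact ((hmem w (hFsub w hw).1).1 z)
    have hint' : ∀ π ∈ S', ∀ τ ∈ S', ∃ x, π x = τ x := by
      intro π hπ τ hτ
      rcases Finset.mem_image.mp hπ with ⟨w, hw, rfl⟩
      rcases Finset.mem_image.mp hτ with ⟨w', hw', rfl⟩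
      rcases hint w (hFsub w hw).1 w' (hFsub w' hw').1 with ⟨p, hp⟩
      have hfst : w.1 p.2 p.1 = w'.1 p.2 p.1 := by
        have := congrArg Prod.fst hp
        exact this
      rw [key w hw p.2, key w' hw' p.2] at hfst
      simp only [Equiv.Perm.mul_apply] at hfst
      exact ⟨p.1, (y.1 p.2).injective hfst⟩
    obtain ⟨x, hx⟩ := hG S' hsub' hint'
    calc F.card = S'.card := hcard.symm
      _ ≤ Nat.card {g : Equiv.Perm (Fin m) // g ∈ G ∧ g x = x} := hx
      _ ≤ A := hx₀ x
  -- the number of fibers is at most C * T.card, where C counts normalized tuples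
  set C : ℕ := Nat.card {c : Fin n → Equiv.Perm (Fin m) // (∀ j, c j ∈ G) ∧ c z = 1} with hC
  have image_le : (S.image Φ).card ≤ C * T.card := by
    have hinj2 : ∃ f : ↥(S.image Φ) →
        ({c : Fin n → Equiv.Perm (Fin m) // (∀ j, c j ∈ G) ∧ c z = 1} ×
          {h : Equiv.Perm (Fin n) // h ∈ T}), Function.Injective f := by
      refine ⟨fun y => ⟨⟨y.1.1, ?_⟩, ⟨y.1.2, ?_⟩⟩, ?_⟩
      · rcases Finset.mem_image.mp y.2 with ⟨w, hw, hΦw⟩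
        have h1 : (fun j => w.1 j * (w.1 z)⁻¹) = y.1.1 := congrArg Prod.fst hΦw
        constructor
        · intro j
          rw [← h1]
          exact mul_mem ((hmem w hw).1 j) (inv_mem ((hmem w hw).1 z))
        · rw [← congrFun h1 z]
          exact mul_inv_cancel _
      · rcases Finset.mem_image.mp y.2 with ⟨w, hw, hΦw⟩
        have h2 : w.2 = y.1.2 := by
          have := congrArg Prod.snd hΦw
          simpa using this
        rw [← h2]
        exact Finset.mem_image_of_mem Prod.snd hw
      · intro y y' hyy
        apply Subtype.ext
        have e1 := congrArg (fun t => (Prod.fst t).1) hyy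
        have e2 := congrArg (fun t => (Prod.snd t).1) hyy
        exact Prod.ext e1 e2
    obtain ⟨f, hf⟩ := hinj2
    calc (S.image Φ).card = Nat.card ↥(S.image Φ) := (Nat.card_eq_finsetCard _).symm
      _ ≤ Nat.card ({c : Fin n → Equiv.Perm (Fin m) // (∀ j, c j ∈ G) ∧ c z = 1} ×
          {h : Equiv.Perm (Fin n) // h ∈ T}) := Nat.card_le_card_of_injective f hf
      _ = C * T.card := by rw [Nat.card_prod, Nat.card_eq_finsetCard]
  -- main counting
  have count1 : S.card ≤ (S.image Φ).card * A := by
    have h1 : S.card = ∑ y ∈ S.image Φ, (S.filter fun w => Φ w = y).card :=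
      Finset.card_eq_sum_card_fiberwise (fun w hw => Finset.mem_image_of_mem Φ hw)
    rw [h1]
    have := Finset.sum_le_card_nsmul (S.image Φ)
      (fun y => (S.filter fun w => Φ w = y).card) A fiber_le
    simpa [smul_eq_mul] using this
  have count2 : S.card ≤ C * B * A := by
    calc S.card ≤ (S.image Φ).card * A := count1
      _ ≤ (C * T.card) * A := Nat.mul_le_mul_right A image_le
      _ ≤ (C * B) * A := Nat.mul_le_mul_right A (Nat.mul_le_mul_left C hj₀)
  -- the stabilizer has cardinality at least C * A * B, via an explicit injection
  have stab_ge : C * B * A ≤ Nat.card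
      {w : (Fin n → Equiv.Perm (Fin m)) × Equiv.Perm (Fin n) //
        (∀ i, w.1 i ∈ G) ∧ w.2 ∈ H ∧ w.1 j₀ x₀ = x₀ ∧ w.2 j₀ = j₀} := by
    set P := {c : Fin n → Equiv.Perm (Fin m) // (∀ j, c j ∈ G) ∧ c z = 1} ×
      ({h : Equiv.Perm (Fin n) // h ∈ H ∧ h j₀ = j₀} ×
        {g : Equiv.Perm (Fin m) // g ∈ G ∧ g x₀ = x₀}) with hP
    have hcardP : Nat.card P = C * B * A := by
      rw [hP, Nat.card_prod, Nat.card_prod, mul_assoc]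
    have hinj3 : ∃ f : P → {w : (Fin n → Equiv.Perm (Fin m)) × Equiv.Perm (Fin n) //
        (∀ i, w.1 i ∈ G) ∧ w.2 ∈ H ∧ w.1 j₀ x₀ = x₀ ∧ w.2 j₀ = j₀}, Function.Injective f := by
      refine ⟨fun p => ⟨(fun j => p.1.1 (Equiv.swap j₀ z j) * p.2.2.1, p.2.1.1),
        fun i => mul_mem (p.1.2.1 _) p.2.2.2.1, p.2.1.2.1, ?_, p.2.1.2.2⟩, ?_⟩
      · show (p.1.1 (Equiv.swap j₀ z j₀) * p.2.2.1) x₀ = x₀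
        rw [Equiv.swap_apply_left, p.1.2.2, one_mul]
        exact p.2.2.2.2
      · intro p q hpq
        have hval := congrArg (fun t => t.1) hpq
        have h2 : p.2.1.1 = q.2.1.1 := congrArg Prod.snd hval
        have h1 := congrArg Prod.fst hval
        have hg : p.2.2.1 = q.2.2.1 := by
          have := congrFun h1 j₀
          simpa [Equiv.swap_apply_left, p.1.2.2, q.1.2.2] using this
        have hc : p.1.1 = q.1.1 := by
          funext i
          have := congrFun h1 (Equiv.swap j₀ z i)
          simp only [Equiv.swap_apply_self] at this
          rw [hg] at this
          exact mul_right_cancel this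
        have e1 : p.1 = q.1 := Subtype.ext hc
        have e2 : p.2 = q.2 := Prod.ext (Subtype.ext h2) (Subtype.ext hg)
        exact Prod.ext e1 e2
    obtain ⟨f, hf⟩ := hinj3
    calc C * B * A = Nat.card P := hcardP.symm
      _ ≤ _ := Nat.card_le_card_of_injective f hf
  exact count2.trans stab_ge
end
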